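/- arXiv:1206.5873 — 4 statements merged into one kernel-verified Lean document; each statement's English description precedes it below -/
import Mathlib

section
/- Let f : (0,1) → ℝ be continuously differentiable with compact support in (0,1). Then ∫₀¹ f(p)² · p/(2(1-p²)) dp ≤ (∫₀¹ f'(p)² · p/(2(1-p²)) dp)^(1/2) · (∫₀¹ f(p)² · (1-p²)² · p/(2(1-p²)) dp)^(1/2). In particular, ∫₀¹ f(p)² (1-p²)² · p/(2(1-p²)) dp ≤ ∫₀¹ f'(p)² · p/(2(1-p²)) dp. -/
/-!
Write `w = p / (2(1 - p²))` and `V = w / (1 - p²)²`. Since `(f² w)² = (f² V) (f² (1 - p²)² w)`,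
Cauchy–Schwarz gives `∫ f² w ≤ (∫ f² V)^(1/2) (∫ f² (1 - p²)² w)^(1/2)`, and `(1 - p²)² w ≤ V`;
so both claims follow from the Hardy inequality `∫ f² V ≤ ∫ f'² w`. For it, take the primitive
`G = ((1 - p²)⁻² - 1) / 8` of `V`, which satisfies `(2G)² ≤ w V` on `(0, 1)`. Then the quadratic
form `w f'² + 4 G f' f + V f²` is nonnegative, while integration by parts turns the integral of
its middle term into `-2 ∫ f² V`.
-/

open MeasureTheory Set Function

lemma quadratic_form_nonneg {x y g : ℝ} (hx : 0 ≤ x) (hy : 0 ≤ y) (h : g ^ 2 ≤ x * y)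
    (s t : ℝ) : 0 ≤ x * s ^ 2 + 2 * g * s * t + y * t ^ 2 := by
  rcases hx.eq_or_lt with rfl | hx
  · obtain rfl : g = 0 := by nlinarith
    simp only [zero_mul, mul_zero, zero_add]
    positivity
  · refine (mul_nonneg_iff_of_pos_left hx).1 ?_
    nlinarith [sq_nonneg (x * s + g * t), sq_nonneg t]

theorem integral_le_sqrt_mul_sqrt {α : Type*} [MeasurableSpace α] {μ : Measure α}
    {g x y : α → ℝ} (hg : Integrable g μ) (hx : Integrable x μ) (hy : Integrable y μ)
    (hx0 : 0 ≤ᵐ[μ] x) (hy0 : 0 ≤ᵐ[μ] y) (h : ∀ᵐ a ∂μ, g a ^ 2 ≤ x a * y a) :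
    ∫ a, g a ∂μ ≤ √(∫ a, x a ∂μ) * √(∫ a, y a ∂μ) := by
  have hdiscrim : discrim (∫ a, x a ∂μ) (2 * ∫ a, g a ∂μ) (∫ a, y a ∂μ) ≤ 0 := by
    refine discrim_le_zero fun s => ?_
    have hint : ∫ a, (x a * (s * s) + 2 * s * g a + y a) ∂μ
        = (∫ a, x a ∂μ) * (s * s) + 2 * (∫ a, g a ∂μ) * s + ∫ a, y a ∂μ := by
      have hxg : Integrable (fun a => x a * (s * s) + 2 * s * g a) μ :=
        (hx.mul_const _).add (hg.const_mul _)
      rw [integral_add hxg hy, integral_add (hx.mul_const _) (hg.const_mul _),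
        integral_mul_const, integral_const_mul]
      ring
    rw [← hint]
    refine integral_nonneg_of_ae ?_
    filter_upwards [hx0, hy0, h] with a hxa hya ha
    simpa [sq, mul_comm, mul_left_comm] using quadratic_form_nonneg hxa hya ha s 1
  rw [← Real.sqrt_mul (integral_nonneg_of_ae hx0)]
  refine (le_abs_self _).trans (Real.abs_le_sqrt ?_)
  rw [discrim] at hdiscrim
  linarith

noncomputable def hardyWeight (p : ℝ) : ℝ := p / (2 * (1 - p ^ 2))

noncomputable def hardyPotential (p : ℝ) : ℝ := p / (2 * (1 - p ^ 2) ^ 3)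

-- The constant `-1/8` makes `G` vanish at `0`, which `(2G)² ≤ w V` needs near `p = 0`.
noncomputable def hardyPrimitive (p : ℝ) : ℝ := (((1 - p ^ 2) ^ 2)⁻¹ - 1) / 8

lemma one_sub_sq_nonneg {p : ℝ} (hp : p ∈ Icc (0 : ℝ) 1) : 0 ≤ 1 - p ^ 2 := by
  nlinarith [hp.1, hp.2]

lemma one_sub_sq_pos {p : ℝ} (hp : p ∈ Ioo (0 : ℝ) 1) : 0 < 1 - p ^ 2 := by
  nlinarith [hp.1, hp.2]

lemma hardyWeight_nonneg {p : ℝ} (hp : p ∈ Icc (0 : ℝ) 1) : 0 ≤ hardyWeight p :=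
  div_nonneg hp.1 (mul_nonneg zero_le_two (one_sub_sq_nonneg hp))

lemma hardyPotential_nonneg {p : ℝ} (hp : p ∈ Icc (0 : ℝ) 1) : 0 ≤ hardyPotential p :=
  div_nonneg hp.1 (mul_nonneg zero_le_two (pow_nonneg (one_sub_sq_nonneg hp) 3))

lemma sq_hardyWeight (p : ℝ) :
    hardyWeight p ^ 2 = (1 - p ^ 2) ^ 2 * hardyWeight p * hardyPotential p := by
  rcases eq_or_ne (1 - p ^ 2) 0 with h | h
  · simp [hardyWeight, h]
  · simp only [hardyWeight, hardyPotential]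
    field_simp

lemma one_sub_sq_sq_mul_hardyWeight_le {p : ℝ} (hp : p ∈ Icc (0 : ℝ) 1) :
    (1 - p ^ 2) ^ 2 * hardyWeight p ≤ hardyPotential p := by
  rcases (one_sub_sq_nonneg hp).eq_or_lt with h | h
  · simp [hardyWeight, hardyPotential, ← h]
  · simp only [hardyWeight, hardyPotential]
    rw [← sub_nonneg]
    have : (1 - p ^ 2) ^ 4 ≤ 1 := pow_le_one₀ h.le (by nlinarith [hp.1])
    field_simp
    nlinarith [hp.1]

lemma hasDerivAt_hardyPrimitive {p : ℝ} (hp : 1 - p ^ 2 ≠ 0) :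
    HasDerivAt hardyPrimitive (hardyPotential p) p := by
  refine (((((hasDerivAt_pow 2 p).const_sub 1).fun_pow 2).inv (pow_ne_zero 2 hp)).sub_const 1
    |>.div_const 8).congr_deriv ?_
  simp only [hardyPotential]
  field_simp
  ring

lemma sq_two_mul_hardyPrimitive_le {p : ℝ} (hp : p ∈ Ioo (0 : ℝ) 1) :
    (2 * hardyPrimitive p) ^ 2 ≤ hardyWeight p * hardyPotential p := by
  have hq := one_sub_sq_pos hp
  obtain ⟨hp0, hp1⟩ := hp
  have hG : 2 * hardyPrimitive p = p ^ 2 * (2 - p ^ 2) / (4 * (1 - p ^ 2) ^ 2) := by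
    simp only [hardyPrimitive]
    field_simp
    ring
  rw [hG, hardyWeight, hardyPotential]
  have hs : p ^ 2 * (2 - p ^ 2) ^ 2 ≤ 4 := by
    have : (2 - p ^ 2) ^ 2 ≤ 4 := by nlinarith
    nlinarith
  rw [div_mul_div_comm, div_pow, div_le_div_iff₀ (by positivity) (by positivity)]
  nlinarith [mul_le_mul_of_nonneg_left hs (by positivity : 0 ≤ 4 * p ^ 2 * (1 - p ^ 2) ^ 4)]

@[fun_prop]
lemma continuousOn_hardyWeight : ContinuousOn hardyWeight (Ioo 0 1) :=
  continuousOn_id.div (by fun_prop) fun p hp => by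
    have := one_sub_sq_pos hp
    positivity

@[fun_prop]
lemma continuousOn_hardyPotential : ContinuousOn hardyPotential (Ioo 0 1) :=
  continuousOn_id.div (by fun_prop) fun p hp => by
    have := one_sub_sq_pos hp
    positivity

@[fun_prop]
lemma continuousOn_hardyPrimitive : ContinuousOn hardyPrimitive (Ioo 0 1) := fun _ hp =>
  (hasDerivAt_hardyPrimitive (one_sub_sq_pos hp).ne').continuousAt.continuousWithinAt

section

variable {f : ℝ → ℝ}

lemma eq_zero_and_deriv_eq_zero_of_notMem_tsupport {p : ℝ} (hp : p ∉ tsupport f) :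
    f p = 0 ∧ deriv f p = 0 :=
  ⟨image_eq_zero_of_notMem_tsupport hp,
    image_eq_zero_of_notMem_tsupport fun h => hp (tsupport_deriv_subset h)⟩

lemma continuous_of_continuousOn_Ioo_of_tsupport_subset {g : ℝ → ℝ}
    (hsub : tsupport f ⊆ Ioo 0 1) (hg : ContinuousOn g (Ioo 0 1))
    (hgf : ∀ p, f p = 0 → deriv f p = 0 → g p = 0) : Continuous g := by
  refine hg.continuous_of_tsupport_subset isOpen_Ioo
    ((closure_minimal (fun p hp => ?_) (isClosed_tsupport f)).trans hsub)
  by_contra hpf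
  exact hp (hgf p (eq_zero_and_deriv_eq_zero_of_notMem_tsupport hpf).1
    (eq_zero_and_deriv_eq_zero_of_notMem_tsupport hpf).2)

lemma integral_hardyPrimitive_by_parts (hf : ContDiff ℝ 1 f) (hsub : tsupport f ⊆ Ioo 0 1) :
    ∫ p in (0 : ℝ)..1, (2 * f p * deriv f p * hardyPrimitive p + f p ^ 2 * hardyPotential p)
      = 0 := by
  have hfc := hf.continuous
  have hf'c := hf.continuous_deriv le_rfl
  have hf0 : f 0 = 0 := image_eq_zero_of_notMem_tsupport fun h => (hsub h).1.false
  have hf1 : f 1 = 0 := image_eq_zero_of_notMem_tsupport fun h => (hsub h).2.false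
  have hF : Continuous fun p => f p ^ 2 * hardyPrimitive p :=
    continuous_of_continuousOn_Ioo_of_tsupport_subset hsub (by fun_prop) fun p h _ => by simp [h]
  have hF' : Continuous fun p =>
      2 * f p * deriv f p * hardyPrimitive p + f p ^ 2 * hardyPotential p :=
    continuous_of_continuousOn_Ioo_of_tsupport_subset hsub (by fun_prop) fun p h _ => by simp [h]
  rw [intervalIntegral.integral_eq_sub_of_hasDerivAt_of_le zero_le_one hF.continuousOn
    (fun p hp => ?_) (hF'.intervalIntegrable 0 1)]
  · simp [hf0, hf1]
  · refine (((hf.differentiable one_ne_zero p).hasDerivAt.fun_pow 2).mul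
      (hasDerivAt_hardyPrimitive (one_sub_sq_pos hp).ne')).congr_deriv ?_
    ring

lemma integral_sq_mul_hardyPotential_le (hf : ContDiff ℝ 1 f) (hsub : tsupport f ⊆ Ioo 0 1) :
    ∫ p in (0 : ℝ)..1, f p ^ 2 * hardyPotential p ≤
      ∫ p in (0 : ℝ)..1, deriv f p ^ 2 * hardyWeight p := by
  have hfc := hf.continuous
  have hf'c := hf.continuous_deriv le_rfl
  have hA : Continuous fun p => deriv f p ^ 2 * hardyWeight p :=
    continuous_of_continuousOn_Ioo_of_tsupport_subset hsub (by fun_prop) fun p _ h => by simp [h]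
  have hD : Continuous fun p => f p ^ 2 * hardyPotential p :=
    continuous_of_continuousOn_Ioo_of_tsupport_subset hsub (by fun_prop) fun p h _ => by simp [h]
  have hE : Continuous fun p =>
      2 * f p * deriv f p * hardyPrimitive p + f p ^ 2 * hardyPotential p :=
    continuous_of_continuousOn_Ioo_of_tsupport_subset hsub (by fun_prop) fun p h _ => by simp [h]
  -- the quadratic form `w f'² + 4 G f' f + V f²`, grouped around the by-parts integrand
  have hquad : 0 ≤ ∫ p in (0 : ℝ)..1, (deriv f p ^ 2 * hardyWeight p +
      2 * (2 * f p * deriv f p * hardyPrimitive p + f p ^ 2 * hardyPotential p) -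
      f p ^ 2 * hardyPotential p) := by
    refine intervalIntegral.integral_nonneg zero_le_one fun p hp => ?_
    by_cases hp' : p ∈ Ioo (0 : ℝ) 1
    · have := quadratic_form_nonneg (hardyWeight_nonneg hp) (hardyPotential_nonneg hp)
        (sq_two_mul_hardyPrimitive_le hp') (deriv f p) (f p)
      linarith
    · obtain ⟨hf0, hf'0⟩ := eq_zero_and_deriv_eq_zero_of_notMem_tsupport fun h => hp' (hsub h)
      simp [hf0, hf'0]
  rw [intervalIntegral.integral_sub ((hA.intervalIntegrable 0 1).add
    ((hE.intervalIntegrable 0 1).const_mul 2)) (hD.intervalIntegrable 0 1),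
    intervalIntegral.integral_add (hA.intervalIntegrable 0 1)
    ((hE.intervalIntegrable 0 1).const_mul 2), intervalIntegral.integral_const_mul,
    integral_hardyPrimitive_by_parts hf hsub] at hquad
  linarith

lemma integral_sq_mul_hardyWeight_le_sqrt_mul_sqrt (hf : Continuous f)
    (hsub : tsupport f ⊆ Ioo 0 1) :
    ∫ p in (0 : ℝ)..1, f p ^ 2 * hardyWeight p ≤
      √(∫ p in (0 : ℝ)..1, f p ^ 2 * hardyPotential p) *
        √(∫ p in (0 : ℝ)..1, f p ^ 2 * (1 - p ^ 2) ^ 2 * hardyWeight p) := by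
  have hI : Continuous fun p => f p ^ 2 * hardyWeight p :=
    continuous_of_continuousOn_Ioo_of_tsupport_subset hsub (by fun_prop) fun p h _ => by simp [h]
  have hB : Continuous fun p => f p ^ 2 * (1 - p ^ 2) ^ 2 * hardyWeight p :=
    continuous_of_continuousOn_Ioo_of_tsupport_subset hsub (by fun_prop) fun p h _ => by simp [h]
  have hD : Continuous fun p => f p ^ 2 * hardyPotential p :=
    continuous_of_continuousOn_Ioo_of_tsupport_subset hsub (by fun_prop) fun p h _ => by simp [h]
  simp only [intervalIntegral.integral_of_le zero_le_one]
  have hIcc : ∀ᵐ p ∂volume.restrict (Ioc (0 : ℝ) 1), p ∈ Icc (0 : ℝ) 1 :=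
    (ae_restrict_mem measurableSet_Ioc).mono fun p hp => Ioc_subset_Icc_self hp
  refine integral_le_sqrt_mul_sqrt hI.integrableOn_Ioc hD.integrableOn_Ioc hB.integrableOn_Ioc
    (hIcc.mono fun p hp => ?_) (hIcc.mono fun p hp => ?_) (hIcc.mono fun p hp => ?_)
  · have := hardyPotential_nonneg hp
    positivity
  · have := hardyWeight_nonneg hp
    positivity
  · rw [mul_pow, sq_hardyWeight]
    exact le_of_eq (by ring)

lemma integral_sq_mul_one_sub_sq_sq_mul_hardyWeight_le (hf : Continuous f)
    (hsub : tsupport f ⊆ Ioo 0 1) :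
    ∫ p in (0 : ℝ)..1, f p ^ 2 * (1 - p ^ 2) ^ 2 * hardyWeight p ≤
      ∫ p in (0 : ℝ)..1, f p ^ 2 * hardyPotential p := by
  have hB : Continuous fun p => f p ^ 2 * (1 - p ^ 2) ^ 2 * hardyWeight p :=
    continuous_of_continuousOn_Ioo_of_tsupport_subset hsub (by fun_prop) fun p h _ => by simp [h]
  have hD : Continuous fun p => f p ^ 2 * hardyPotential p :=
    continuous_of_continuousOn_Ioo_of_tsupport_subset hsub (by fun_prop) fun p h _ => by simp [h]
  refine intervalIntegral.integral_mono_on zero_le_one (hB.intervalIntegrable 0 1)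
    (hD.intervalIntegrable 0 1) fun p hp => ?_
  rw [mul_assoc]
  exact mul_le_mul_of_nonneg_left (one_sub_sq_sq_mul_hardyWeight_le hp) (sq_nonneg _)

end

theorem stmt2_general (f : ℝ → ℝ) (hf : ContDiff ℝ 1 f)
    (hsub : tsupport f ⊆ Set.Ioo 0 1) :
    (∫ p in (0:ℝ)..1, f p ^ 2 * (p / (2 * (1 - p^2)))) ≤
        Real.sqrt (∫ p in (0:ℝ)..1, (deriv f p) ^ 2 * (p / (2 * (1 - p^2)))) *
        Real.sqrt (∫ p in (0:ℝ)..1, f p ^ 2 * (1 - p^2)^2 * (p / (2 * (1 - p^2)))) ∧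
    (∫ p in (0:ℝ)..1, f p ^ 2 * (1 - p^2)^2 * (p / (2 * (1 - p^2)))) ≤
        ∫ p in (0:ℝ)..1, (deriv f p) ^ 2 * (p / (2 * (1 - p^2))) := by
  have hardy := integral_sq_mul_hardyPotential_le hf hsub
  exact ⟨(integral_sq_mul_hardyWeight_le_sqrt_mul_sqrt hf.continuous hsub).trans
      (mul_le_mul_of_nonneg_right (Real.sqrt_le_sqrt hardy) (Real.sqrt_nonneg _)),
    (integral_sq_mul_one_sub_sq_sq_mul_hardyWeight_le hf.continuous hsub).trans hardy⟩

theorem stmt2 (f : ℝ → ℝ) (hf : ContDiff ℝ 1 f) (hsupp : HasCompactSupport f)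
    (hsub : tsupport f ⊆ Set.Ioo 0 1) :
    (∫ p in (0:ℝ)..1, f p ^ 2 * (p / (2 * (1 - p^2)))) ≤
        Real.sqrt (∫ p in (0:ℝ)..1, (deriv f p) ^ 2 * (p / (2 * (1 - p^2)))) *
        Real.sqrt (∫ p in (0:ℝ)..1, f p ^ 2 * (1 - p^2)^2 * (p / (2 * (1 - p^2)))) ∧
    (∫ p in (0:ℝ)..1, f p ^ 2 * (1 - p^2)^2 * (p / (2 * (1 - p^2)))) ≤
        ∫ p in (0:ℝ)..1, (deriv f p) ^ 2 * (p / (2 * (1 - p^2))) :=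
  stmt2_general f hf hsub
end

section
/- Define η : [1,∞) → ℝ depending on a parameter n > 0 by η(r) = n(r-1) for r ∈ [1, 1+1/n), η(r) = 1 for r ∈ [1+1/n, √2), and η(r) = e^{2√2/3}·e^{-2r/3} for r ∈ [√2, ∞). Then for all sufficiently large n, 16∫₁^∞ η(r)² (1 - r⁻¹) dr + 4∫₁^∞ η'(r)² (1 - r⁻¹) dr - 16∫₁^∞ η(r)² r⁻¹ dr < 0. -/
/-!
Split the integral at `r = 1 + 1/n` and `r = √2`. On the ramp `(1, 1 + 1/n)` the density is at
most `(16 + 4n²)(r - 1)`, contributing `2 + 8/n²`. On the plateau it is exactly `16 - 32/r`,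
contributing `16(√2 - 1) - 16 log 2 + O(1/n) ≈ -4.46`. On the tail `η'² = (4/9) η²` and
`η² = e^{-(4/3)(r - √2)}`, so the density is `η² (160/9 - 304/(9r))`; the bound
`1/r ≥ e^{-(r - √2)/√2}/√2` (from `eˣ ≥ 1 + x`) reduces it to exponential integrals, giving at most
`40/3 - 304/(3(4√2 + 3)) ≈ 1.63`. The total is about `-0.8` for large `n`.
-/

open MeasureTheory Set Real

theorem exp_neg_mul_sub_eq (b s r : ℝ) : exp (-b * (r - s)) = exp (b * s) * exp (-b * r) := by
  rw [← exp_add]; ring_nf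

theorem integrableOn_Ioi_exp_neg_mul_sub {b : ℝ} (hb : 0 < b) (a s : ℝ) :
    IntegrableOn (fun r => exp (-b * (r - s))) (Ioi a) := by
  simp_rw [exp_neg_mul_sub_eq b s]
  exact (integrableOn_exp_mul_Ioi (neg_neg_of_pos hb) a).const_mul _

theorem integral_Ioi_exp_neg_mul_sub {b : ℝ} (hb : 0 < b) (s : ℝ) :
    ∫ r in Ioi s, exp (-b * (r - s)) = b⁻¹ := by
  simp_rw [exp_neg_mul_sub_eq b s, integral_const_mul, integral_exp_mul_Ioi (neg_neg_of_pos hb)]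
  rw [neg_div_neg_eq, mul_div_assoc', ← exp_add, neg_mul, add_neg_cancel, exp_zero, one_div]

theorem exp_neg_inv_mul_sub_le {r s : ℝ} (hs : 0 < s) (hr : 0 < r) :
    exp (-s⁻¹ * (r - s)) ≤ s * r⁻¹ := by
  have h : r / s ≤ exp (r / s - 1) := by linarith [add_one_le_exp (r / s - 1)]
  rw [show -s⁻¹ * (r - s) = -(r / s - 1) by field_simp, exp_neg,
    show s * r⁻¹ = (r / s)⁻¹ by rw [inv_div, div_eq_mul_inv]]
  exact inv_anti₀ (div_pos hr hs) h

theorem setIntegral_Ioo_sub_left {a b : ℝ} (hab : a ≤ b) :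
    ∫ r in Ioo a b, (r - a) = (b - a) ^ 2 / 2 := by
  rw [← integral_Ioc_eq_integral_Ioo, ← intervalIntegral.integral_of_le hab]
  simp only [intervalIntegral.integral_sub, intervalIntegral.intervalIntegrable_id,
    intervalIntegrable_const, integral_id, intervalIntegral.integral_const, smul_eq_mul]
  ring

theorem integrableOn_sq_mul_of_abs_le {f g w : ℝ → ℝ} {s : Set ℝ} (hs : MeasurableSet s)
    (hg : IntegrableOn (fun r => g r ^ 2) s) (hf : Measurable f) (hw : Measurable w)
    (hfg : ∀ r ∈ s, |f r| ≤ g r) (hw₁ : ∀ r ∈ s, |w r| ≤ 1) :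
    IntegrableOn (fun r => f r ^ 2 * w r) s := by
  refine hg.mono' (by fun_prop : Measurable fun r => f r ^ 2 * w r).aestronglyMeasurable ?_
  filter_upwards [ae_restrict_mem hs] with r hr
  calc ‖f r ^ 2 * w r‖ = |f r| ^ 2 * |w r| := by simp [sq_abs]
    _ ≤ g r ^ 2 * 1 := by
      gcongr
      exacts [hfg r hr, hw₁ r hr]
    _ = g r ^ 2 := mul_one _

theorem integral_Ioi_eq_Ioo_add_Ico_add_Ioi {f : ℝ → ℝ} {a b c : ℝ} (hab : a < b) (hbc : b ≤ c)
    (hf : IntegrableOn f (Ioi a)) :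
    ∫ r in Ioi a, f r = (∫ r in Ioo a b, f r) + (∫ r in Ico b c, f r) + ∫ r in Ioi c, f r := by
  have hb : IntegrableOn f (Ici b) := hf.mono_set (Ici_subset_Ioi.2 hab)
  rw [← Ioo_union_Ici_eq_Ioi hab, setIntegral_union
      ((Iio_disjoint_Ici le_rfl).mono_left Ioo_subset_Iio_self) measurableSet_Ici
      (hf.mono_set Ioo_subset_Ioi_self) hb, ← Ico_union_Ici_eq_Ici hbc, setIntegral_union
      ((Iio_disjoint_Ici le_rfl).mono_left Ico_subset_Iio_self) measurableSet_Ici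
      (hb.mono_set Ico_subset_Ici_self) (hb.mono_set (Ici_subset_Ici.2 hbc)), add_assoc,
      integral_Ici_eq_integral_Ioi]

/-- `a(η h̄) / (4π w₂)` in the paper, with `ηd` standing for `η'`. -/
noncomputable def energy (η ηd : ℝ → ℝ) : ℝ :=
  16 * (∫ r in Ioi (1:ℝ), η r ^ 2 * (1 - r⁻¹))
    + 4 * (∫ r in Ioi (1:ℝ), ηd r ^ 2 * (1 - r⁻¹))
    - 16 * (∫ r in Ioi (1:ℝ), η r ^ 2 * r⁻¹)

noncomputable def energyDensity (η ηd : ℝ → ℝ) (r : ℝ) : ℝ :=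
  16 * (η r ^ 2 * (1 - r⁻¹)) + 4 * (ηd r ^ 2 * (1 - r⁻¹)) - 16 * (η r ^ 2 * r⁻¹)

section Energy

variable {η ηd : ℝ → ℝ}

theorem energy_eq_integral_energyDensity
    (h₁ : IntegrableOn (fun r => η r ^ 2 * (1 - r⁻¹)) (Ioi 1))
    (h₂ : IntegrableOn (fun r => ηd r ^ 2 * (1 - r⁻¹)) (Ioi 1))
    (h₃ : IntegrableOn (fun r => η r ^ 2 * r⁻¹) (Ioi 1)) :
    energy η ηd = ∫ r in Ioi 1, energyDensity η ηd r := by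
  have h₁₂ : IntegrableOn (fun r => 16 * (η r ^ 2 * (1 - r⁻¹)) + 4 * (ηd r ^ 2 * (1 - r⁻¹)))
      (Ioi 1) := (h₁.const_mul 16).add (h₂.const_mul 4)
  simp only [energy, energyDensity]
  rw [integral_sub h₁₂ (h₃.const_mul 16), integral_add (h₁.const_mul 16) (h₂.const_mul 4),
    integral_const_mul, integral_const_mul, integral_const_mul]

theorem integrableOn_energyDensity
    (h₁ : IntegrableOn (fun r => η r ^ 2 * (1 - r⁻¹)) (Ioi 1))
    (h₂ : IntegrableOn (fun r => ηd r ^ 2 * (1 - r⁻¹)) (Ioi 1))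
    (h₃ : IntegrableOn (fun r => η r ^ 2 * r⁻¹) (Ioi 1)) :
    IntegrableOn (energyDensity η ηd) (Ioi 1) :=
  ((h₁.const_mul 16).add (h₂.const_mul 4)).sub (h₃.const_mul 16)

end Energy

noncomputable def decay (r : ℝ) : ℝ := exp (2 * √2 / 3) * exp (-2 * r / 3)

noncomputable def cutoff (n r : ℝ) : ℝ :=
  if r < 1 + 1 / n then n * (r - 1) else if r < √2 then 1 else decay r

noncomputable def cutoffDeriv (n r : ℝ) : ℝ :=
  if r < 1 + 1 / n then n else if r < √2 then 0 else (-2 / 3) * decay r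

theorem decay_eq (r : ℝ) : decay r = exp (-(2 / 3) * (r - √2)) := by
  rw [decay, ← exp_add]; ring_nf

theorem decay_pos (r : ℝ) : 0 < decay r := by
  rw [decay_eq]; positivity

theorem one_le_decay {r : ℝ} (hr : r ≤ √2) : 1 ≤ decay r := by
  rw [decay_eq]; exact one_le_exp (by nlinarith)

theorem decay_sq (r : ℝ) : decay r ^ 2 = exp (-(4 / 3) * (r - √2)) := by
  rw [decay_eq, ← exp_nat_mul]; ring_nf

theorem measurable_cutoff (n : ℝ) : Measurable (cutoff n) := by
  unfold cutoff decay
  exact Measurable.ite measurableSet_Iio (by fun_prop)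
    (Measurable.ite measurableSet_Iio (by fun_prop) (by fun_prop))

theorem measurable_cutoffDeriv (n : ℝ) : Measurable (cutoffDeriv n) := by
  unfold cutoffDeriv decay
  exact Measurable.ite measurableSet_Iio (by fun_prop)
    (Measurable.ite measurableSet_Iio (by fun_prop) (by fun_prop))

section Cutoff

variable {n r : ℝ}

theorem mul_sub_one_lt_one (hn : 0 < n) (hr : r < 1 + 1 / n) : n * (r - 1) < 1 := by
  rwa [← lt_div_iff₀' hn, sub_lt_iff_lt_add']

theorem abs_cutoff_le (hn : 0 < n) (hns : 1 + 1 / n ≤ √2) (hr : 1 < r) :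
    |cutoff n r| ≤ decay r := by
  unfold cutoff
  split_ifs with h₁ h₂
  · rw [abs_of_nonneg (by nlinarith)]
    linarith [mul_sub_one_lt_one hn h₁, one_le_decay (h₁.le.trans hns)]
  · simpa using one_le_decay h₂.le
  · exact (abs_of_pos (decay_pos r)).le

theorem abs_cutoffDeriv_le (hn : 1 ≤ n) (hns : 1 + 1 / n ≤ √2) :
    |cutoffDeriv n r| ≤ n * decay r := by
  have hd := decay_pos r
  unfold cutoffDeriv
  split_ifs with h₁ h₂
  · rw [abs_of_nonneg (by linarith)]
    nlinarith [one_le_decay (h₁.le.trans hns)]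
  · rw [abs_zero]; positivity
  · rw [abs_mul, abs_of_pos hd, abs_of_neg (by norm_num)]
    nlinarith

theorem integrableOn_cutoff_sq_mul (hn : 1 ≤ n) (hns : 1 + 1 / n ≤ √2) :
    IntegrableOn (fun r => cutoff n r ^ 2 * (1 - r⁻¹)) (Ioi 1) ∧
      IntegrableOn (fun r => cutoffDeriv n r ^ 2 * (1 - r⁻¹)) (Ioi 1) ∧
      IntegrableOn (fun r => cutoff n r ^ 2 * r⁻¹) (Ioi 1) := by
  have hsq : IntegrableOn (fun r => decay r ^ 2) (Ioi 1) := by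
    simp_rw [decay_sq]
    exact integrableOn_Ioi_exp_neg_mul_sub (by norm_num) 1 √2
  have hsq' : IntegrableOn (fun r => (n * decay r) ^ 2) (Ioi 1) := by
    simp_rw [mul_pow]
    exact hsq.const_mul _
  have hη : ∀ r ∈ Ioi (1:ℝ), |cutoff n r| ≤ decay r := fun r hr =>
    abs_cutoff_le (by linarith) hns hr
  have hηd : ∀ r ∈ Ioi (1:ℝ), |cutoffDeriv n r| ≤ n * decay r := fun _ _ =>
    abs_cutoffDeriv_le hn hns
  have hinv : ∀ r ∈ Ioi (1:ℝ), 0 < r⁻¹ ∧ r⁻¹ < 1 := fun r hr =>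
    ⟨inv_pos.2 (zero_lt_one.trans hr), inv_lt_one_of_one_lt₀ hr⟩
  have hw : ∀ r ∈ Ioi (1:ℝ), |r⁻¹| ≤ 1 := fun r hr => by
    obtain ⟨h₀, h₁⟩ := hinv r hr
    exact abs_le.2 ⟨by linarith, h₁.le⟩
  have hw' : ∀ r ∈ Ioi (1:ℝ), |1 - r⁻¹| ≤ 1 := fun r hr => by
    obtain ⟨h₀, h₁⟩ := hinv r hr
    exact abs_le.2 ⟨by linarith, by linarith⟩
  exact ⟨integrableOn_sq_mul_of_abs_le measurableSet_Ioi hsq (measurable_cutoff n) (by fun_prop)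
      hη hw',
    integrableOn_sq_mul_of_abs_le measurableSet_Ioi hsq' (measurable_cutoffDeriv n) (by fun_prop)
      hηd hw',
    integrableOn_sq_mul_of_abs_le measurableSet_Ioi hsq (measurable_cutoff n) (by fun_prop) hη hw⟩

theorem energyDensity_cutoff_le_of_lt (hn : 0 < n) (h₁ : 1 < r) (h₂ : r < 1 + 1 / n) :
    energyDensity (cutoff n) (cutoffDeriv n) r ≤ (16 + 4 * n ^ 2) * (r - 1) := by
  have hr : 0 < r⁻¹ := inv_pos.2 (zero_lt_one.trans h₁)
  have hr' : r⁻¹ ≤ 1 := inv_le_one_of_one_le₀ h₁.le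
  have htan : 1 - r⁻¹ ≤ r - 1 := by
    rw [show 1 - r⁻¹ = (r - 1) * r⁻¹ by field_simp]
    nlinarith
  have hx : (n * (r - 1)) ^ 2 ≤ 1 := by
    have := mul_sub_one_lt_one hn h₂
    nlinarith [mul_pos hn (sub_pos.2 h₁)]
  simp only [energyDensity, cutoff, cutoffDeriv, if_pos h₂]
  nlinarith [mul_le_mul_of_nonneg_right hx (sub_nonneg.2 hr'),
    mul_le_mul_of_nonneg_left htan (sq_nonneg n), mul_nonneg (sq_nonneg (n * (r - 1))) hr.le]

theorem energyDensity_cutoff_of_mem_Ico (h : r ∈ Ico (1 + 1 / n) √2) :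
    energyDensity (cutoff n) (cutoffDeriv n) r = 16 - 32 * r⁻¹ := by
  simp only [energyDensity, cutoff, cutoffDeriv, if_neg (not_lt.2 h.1), if_pos h.2]
  ring

theorem energyDensity_cutoff_le_of_le (hns : 1 + 1 / n ≤ √2) (h : √2 ≤ r) :
    energyDensity (cutoff n) (cutoffDeriv n) r ≤
      160 / 9 * exp (-(4 / 3) * (r - √2))
        - 304 / 9 * ((√2)⁻¹ * exp (-(4 / 3 + (√2)⁻¹) * (r - √2))) := by
  have hs : 0 < √2 := by positivity
  have hinv : (√2)⁻¹ * exp (-(√2)⁻¹ * (r - √2)) ≤ r⁻¹ :=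
    (inv_mul_le_iff₀ hs).2 (exp_neg_inv_mul_sub_le hs (hs.trans_le h))
  have hD : exp (-(4 / 3 + (√2)⁻¹) * (r - √2)) = decay r ^ 2 * exp (-(√2)⁻¹ * (r - √2)) := by
    rw [decay_sq, ← exp_add]; ring_nf
  simp only [energyDensity, cutoff, cutoffDeriv, if_neg (not_lt.2 (hns.trans h)),
    if_neg (not_lt.2 h)]
  rw [hD, ← decay_sq]
  nlinarith [mul_le_mul_of_nonneg_left hinv (sq_nonneg (decay r))]

theorem setIntegral_energyDensity_cutoff_Ioo_le (hn : 0 < n)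
    (hG : IntegrableOn (energyDensity (cutoff n) (cutoffDeriv n)) (Ioi 1)) :
    ∫ r in Ioo 1 (1 + 1 / n), energyDensity (cutoff n) (cutoffDeriv n) r ≤ 2 + 8 / n ^ 2 := by
  have hbound : Continuous fun r : ℝ => (16 + 4 * n ^ 2) * (r - 1) := by fun_prop
  calc _ ≤ ∫ r in Ioo 1 (1 + 1 / n), (16 + 4 * n ^ 2) * (r - 1) :=
        setIntegral_mono_on (hG.mono_set Ioo_subset_Ioi_self)
          (hbound.integrableOn_Icc.mono_set Ioo_subset_Icc_self) measurableSet_Ioo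
          fun r hr => energyDensity_cutoff_le_of_lt hn hr.1 hr.2
    _ = 2 + 8 / n ^ 2 := by
        rw [integral_const_mul, setIntegral_Ioo_sub_left (le_add_of_nonneg_right (by positivity))]
        field_simp
        ring

theorem setIntegral_energyDensity_cutoff_Ico (hn : 0 < n) (hns : 1 + 1 / n ≤ √2) :
    ∫ r in Ico (1 + 1 / n) √2, energyDensity (cutoff n) (cutoffDeriv n) r
      = 16 * (√2 - (1 + 1 / n)) - 32 * log (√2 / (1 + 1 / n)) := by
  have ha : 0 < 1 + 1 / n := by positivity
  have hzero : (0:ℝ) ∉ uIcc (1 + 1 / n) √2 := by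
    rw [uIcc_of_le hns]; exact fun h => ha.not_ge h.1
  rw [setIntegral_congr_fun measurableSet_Ico fun r hr => energyDensity_cutoff_of_mem_Ico hr,
    integral_Ico_eq_integral_Ioo, ← integral_Ioc_eq_integral_Ioo,
    ← intervalIntegral.integral_of_le hns, intervalIntegral.integral_sub intervalIntegrable_const
      ((intervalIntegrable_inv_iff.2 (Or.inr hzero)).const_mul 32),
    intervalIntegral.integral_const, intervalIntegral.integral_const_mul,
    integral_inv_of_pos ha (ha.trans_le hns), smul_eq_mul, mul_comm]

theorem setIntegral_energyDensity_cutoff_Ioi_le (hns : 1 + 1 / n ≤ √2)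
    (hG : IntegrableOn (energyDensity (cutoff n) (cutoffDeriv n)) (Ioi 1)) :
    ∫ r in Ioi √2, energyDensity (cutoff n) (cutoffDeriv n) r
      ≤ 40 / 3 - 304 / (3 * (4 * √2 + 3)) := by
  have hs : 0 < √2 := by positivity
  have hb : 0 < 4 / 3 + (√2)⁻¹ := by positivity
  have h₁ := integrableOn_Ioi_exp_neg_mul_sub (b := 4 / 3) (by norm_num) √2 √2
  have h₂ := integrableOn_Ioi_exp_neg_mul_sub hb √2 √2
  calc _ ≤ ∫ r in Ioi √2, (160 / 9 * exp (-(4 / 3) * (r - √2))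
          - 304 / 9 * ((√2)⁻¹ * exp (-(4 / 3 + (√2)⁻¹) * (r - √2)))) :=
        setIntegral_mono_on (hG.mono_set (Ioi_subset_Ioi one_lt_sqrt_two.le))
          ((h₁.const_mul _).sub ((h₂.const_mul _).const_mul _)) measurableSet_Ioi
          fun r hr => energyDensity_cutoff_le_of_le hns (le_of_lt hr)
    _ = 160 / 9 * (4 / 3)⁻¹ - 304 / 9 * ((√2)⁻¹ * (4 / 3 + (√2)⁻¹)⁻¹) := by
        rw [integral_sub (h₁.const_mul _) ((h₂.const_mul _).const_mul _), integral_const_mul,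
          integral_const_mul, integral_const_mul, integral_Ioi_exp_neg_mul_sub (by norm_num),
          integral_Ioi_exp_neg_mul_sub hb]
    _ = 40 / 3 - 304 / (3 * (4 * √2 + 3)) := by
        field_simp
        ring

end Cutoff

theorem energy_cutoff_neg {n : ℝ} (hn : 100 ≤ n) : energy (cutoff n) (cutoffDeriv n) < 0 := by
  have hn₀ : 0 < n := by linarith
  have hinv : 0 < 1 / n ∧ 1 / n ≤ 1 / 100 :=
    ⟨by positivity, one_div_le_one_div_of_le (by norm_num) hn⟩
  have hsqrt : 1.414 < √2 ∧ √2 < 1.4143 :=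
    ⟨by rw [lt_sqrt (by norm_num)]; norm_num, by rw [sqrt_lt' (by norm_num)]; norm_num⟩
  have ha : 1 < 1 + 1 / n := by linarith
  have hns : 1 + 1 / n ≤ √2 := by linarith
  obtain ⟨h₁, h₂, h₃⟩ := integrableOn_cutoff_sq_mul (by linarith) hns
  have hG := integrableOn_energyDensity h₁ h₂ h₃
  rw [energy_eq_integral_energyDensity h₁ h₂ h₃, integral_Ioi_eq_Ioo_add_Ico_add_Ioi ha hns hG,
    setIntegral_energyDensity_cutoff_Ico hn₀ hns]
  have hI₁ := setIntegral_energyDensity_cutoff_Ioo_le hn₀ hG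
  have hI₃ := setIntegral_energyDensity_cutoff_Ioi_le hns hG
  have hlog : log 2 / 2 - 1 / n ≤ log (√2 / (1 + 1 / n)) := by
    rw [log_div (by positivity) (by positivity), log_sqrt zero_le_two]
    linarith [log_le_sub_one_of_pos (by positivity : 0 < 1 + 1 / n)]
  have htail : 11.7 ≤ 304 / (3 * (4 * √2 + 3)) := by
    rw [le_div_iff₀ (by positivity)]; linarith
  have hsq : 8 / n ^ 2 ≤ 1 / 1000 := by
    rw [div_le_iff₀ (by positivity)]; nlinarith
  linarith [log_two_gt_d9]

theorem stmt3 : ∃ N : ℝ, 0 < N ∧ ∀ n : ℝ, N ≤ n →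
    (fun (η ηd : ℝ → ℝ) =>
      16 * (∫ r in Set.Ioi (1:ℝ), η r ^ 2 * (1 - r⁻¹))
        + 4 * (∫ r in Set.Ioi (1:ℝ), ηd r ^ 2 * (1 - r⁻¹))
        - 16 * (∫ r in Set.Ioi (1:ℝ), η r ^ 2 * r⁻¹) < 0)
      (fun r => if r < 1 + 1/n then n * (r - 1)
        else if r < Real.sqrt 2 then 1
        else Real.exp (2 * Real.sqrt 2 / 3) * Real.exp (-2 * r / 3))
      (fun r => if r < 1 + 1/n then n
        else if r < Real.sqrt 2 then 0
        else (-2/3) * (Real.exp (2 * Real.sqrt 2 / 3) * Real.exp (-2 * r / 3))) :=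
  ⟨100, by norm_num, fun _ hn => energy_cutoff_neg hn⟩
end

section
/- Let U ⊂ ℝⁿ be open (possibly unbounded), T > 0, and let u ∈ C²(U × [0,T]) satisfy ∂u/∂t ≤ a^{ij}(x,t) ∂²u/∂x_i∂x_j in U × (0,T], where a^{ij} are smooth bounded functions with Λ⁻¹|ξ|² ≤ a^{ij}(x,t)ξ_iξ_j ≤ Λ|ξ|² for all ξ ∈ ℝⁿ and some Λ > 0. Assume |u(x,t)| ≤ A·e^{a|x|²} for constants A, a > 0. Then max over U×[0,T] of u equals the max of u over the parabolic boundary (∂U × [0,T]) ∪ (U × {0}). -/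
/-- Second partial derivative `∂²v/∂xᵢ∂xⱼ` evaluated at `x`. -/
noncomputable def pd2 {n : ℕ} (v : (Fin n → ℝ) → ℝ) (x : Fin n → ℝ) (i j : Fin n) : ℝ :=
  fderiv ℝ (fun y => fderiv ℝ v y (Pi.single i 1)) x (Pi.single j 1)

open Set Filter Topology Finset

lemma dsum_eq {n : ℕ} (f g : Fin n → Fin n → ℝ) (h : ∀ i j, f i j = g i j) :
    ∑ i, ∑ j, f i j = ∑ i, ∑ j, g i j :=
  Finset.sum_congr rfl fun i _ => Finset.sum_congr rfl fun j _ => h i j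

lemma dsum_swap {n : ℕ} (f : Fin n → Fin n → ℝ) :
    ∑ i, ∑ j, f i j = ∑ i, ∑ j, f j i := Finset.sum_comm

lemma dsum_add {n : ℕ} (f g : Fin n → Fin n → ℝ) :
    ∑ i, ∑ j, (f i j + g i j) = (∑ i, ∑ j, f i j) + ∑ i, ∑ j, g i j := by
  rw [← Finset.sum_add_distrib]
  exact Finset.sum_congr rfl fun i _ => by rw [← Finset.sum_add_distrib]

lemma dsum_div2 {n : ℕ} (f : Fin n → Fin n → ℝ) :
    ∑ i, ∑ j, f i j / 2 = (∑ i, ∑ j, f i j) / 2 := by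
  rw [Finset.sum_div]
  exact Finset.sum_congr rfl fun i _ => by rw [Finset.sum_div]

/-- If the quadratic form of `a` is nonneg and that of `H` is nonpos, with `H` symmetric,
then `∑ a_ij H_ij ≤ 0`. -/
lemma trace_le_zero {n : ℕ} (a H : Fin n → Fin n → ℝ)
    (ha : ∀ ξ : Fin n → ℝ, 0 ≤ ∑ i, ∑ j, a i j * ξ i * ξ j)
    (hH : ∀ ξ : Fin n → ℝ, ∑ i, ∑ j, ξ i * ξ j * H i j ≤ 0)
    (hHs : ∀ i j, H i j = H j i) :
    ∑ i, ∑ j, a i j * H i j ≤ 0 := by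
  set A : Matrix (Fin n) (Fin n) ℝ := Matrix.of (fun i j => (a i j + a j i) / 2) with hA
  have hAherm : A.IsHermitian := by
    ext i j
    simp [hA, Matrix.conjTranspose, add_comm]
  have hApsd : A.PosSemidef := by
    refine Matrix.PosSemidef.of_dotProduct_mulVec_nonneg hAherm fun x => ?_
    have e0 : (dotProduct (star x) (A.mulVec x)) = ∑ i, ∑ j, A i j * x i * x j := by
      simp only [dotProduct, Matrix.mulVec, star_trivial, dotProduct,
        Finset.mul_sum]
      exact dsum_eq _ _ (fun i j => by ring)
    rw [e0]
    have swap : ∑ i, ∑ j, a j i * x i * x j = ∑ i, ∑ j, a i j * x i * x j := by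
      rw [dsum_swap]; exact dsum_eq _ _ (fun i j => by ring)
    have e1 : ∑ i, ∑ j, A i j * x i * x j
        = ∑ i, ∑ j, ((a i j * x i * x j) / 2 + (a j i * x i * x j) / 2) :=
      dsum_eq _ _ (fun i j => by simp only [hA, Matrix.of_apply]; ring)
    rw [e1, dsum_add, dsum_div2, dsum_div2, swap]
    have h1 := ha x
    linarith
  obtain ⟨S, hSmul, hSsa⟩ : ∃ S : Matrix (Fin n) (Fin n) ℝ, S * S = A ∧ S.conjTranspose = S := by
    open scoped MatrixOrder Matrix.Norms.L2Operator in
    exact ⟨CFC.sqrt A, CFC.sqrt_mul_sqrt_self A hApsd.nonneg, (CFC.sqrt_nonneg A).isSelfAdjoint⟩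
  have hSsym : ∀ i j, S i j = S j i := by
    intro i j
    have := congrFun (congrFun hSsa i) j
    simpa [Matrix.conjTranspose_apply] using this.symm
  -- reduce a to A using symmetry of H
  have redA : ∑ i, ∑ j, a i j * H i j = ∑ i, ∑ j, A i j * H i j := by
    have swap : ∑ i, ∑ j, a j i * H i j = ∑ i, ∑ j, a i j * H i j := by
      rw [dsum_swap]; exact dsum_eq _ _ (fun i j => by rw [hHs i j])
    have e1 : ∑ i, ∑ j, A i j * H i j
        = ∑ i, ∑ j, ((a i j * H i j) / 2 + (a j i * H i j) / 2) :=
      dsum_eq _ _ (fun i j => by simp only [hA, Matrix.of_apply]; ring)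
    rw [e1, dsum_add, dsum_div2, dsum_div2, swap]
    ring
  rw [redA]
  have expand : ∑ i, ∑ j, A i j * H i j
      = ∑ k, ∑ i, ∑ j, (S i k) * (S j k) * H i j := by
    have e1 : ∑ i, ∑ j, A i j * H i j
        = ∑ i, ∑ j, ∑ k, S i k * S k j * H i j := by
      refine dsum_eq _ _ (fun i j => ?_)
      rw [← hSmul, Matrix.mul_apply, Finset.sum_mul]
    rw [e1]
    have e2 : ∀ i : Fin n, ∑ j, ∑ k, S i k * S k j * H i j
        = ∑ k, ∑ j, S i k * S k j * H i j := fun i => Finset.sum_comm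
    rw [Finset.sum_congr rfl (fun i _ => e2 i), Finset.sum_comm]
    refine Finset.sum_congr rfl fun k _ => Finset.sum_congr rfl fun i _ =>
      Finset.sum_congr rfl fun j _ => by rw [hSsym k j]
  rw [expand]
  refine Finset.sum_nonpos fun k _ => ?_
  have := hH (fun i => S i k)
  exact this

lemma dsum_cmul {n : ℕ} (f : Fin n → Fin n → ℝ) (c : ℝ) :
    ∑ i, ∑ j, c * f i j = c * ∑ i, ∑ j, f i j := by
  rw [Finset.mul_sum]
  exact Finset.sum_congr rfl fun i _ => by rw [Finset.mul_sum]

/-- One-sided derivative sign at a right endpoint maximum. -/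
lemma deriv_nonneg_of_isMaxOn_Icc {g : ℝ → ℝ} {s τ : ℝ} (hsτ : s < τ)
    (hg : DifferentiableAt ℝ g τ) (h : ∀ t ∈ Set.Icc s τ, g t ≤ g τ) :
    0 ≤ deriv g τ := by
  have hd := hg.hasDerivAt
  rw [hasDerivAt_iff_tendsto_slope] at hd
  have hd' : Tendsto (slope g τ) (𝓝[<] τ) (𝓝 (deriv g τ)) :=
    hd.mono_left (nhdsWithin_mono τ (fun t ht => Set.mem_compl_singleton_iff.mpr (ne_of_lt ht)))
  refine ge_of_tendsto hd' ?_
  filter_upwards [Ioo_mem_nhdsLT_of_mem (Set.mem_Ioc.mpr ⟨hsτ, le_refl τ⟩)] with t ht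
  rw [slope_def_field, ← neg_div_neg_eq]
  apply div_nonneg
  · have := h t ⟨ht.1.le, ht.2.le⟩; linarith
  · have := ht.2; linarith

/-- 1D second derivative test (necessary condition) at a local max. -/
lemma deriv2_nonpos_of_max {g : ℝ → ℝ} {δ : ℝ} (hδ : 0 < δ) (hg : ContDiff ℝ 2 g)
    (hmax : ∀ t ∈ Set.Ioo (-δ) δ, g t ≤ g 0) : deriv (deriv g) 0 ≤ 0 := by
  by_contra hpos
  push_neg at hpos
  have hgd : Differentiable ℝ g ∧ ContDiff ℝ 1 (deriv g) := by
    have h2 : ContDiff ℝ (1+1) g := by norm_num at hg ⊢; exact hg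
    rw [contDiff_succ_iff_deriv] at h2
    exact ⟨h2.1, h2.2.2⟩
  have hloc : IsLocalMax g 0 := by
    filter_upwards [Ioo_mem_nhds (by linarith : -δ < 0) hδ] with t ht using hmax t ht
  have hg'0 : deriv g 0 = 0 := hloc.deriv_eq_zero
  have hd2 : HasDerivAt (deriv g) (deriv (deriv g) 0) 0 :=
    ((hgd.2.differentiable (by norm_num)) 0).hasDerivAt
  rw [hasDerivAt_iff_tendsto_slope] at hd2
  have hd2' : Tendsto (slope (deriv g) 0) (𝓝[>] 0) (𝓝 (deriv (deriv g) 0)) :=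
    hd2.mono_left (nhdsWithin_mono 0 (fun t ht => Set.mem_compl_singleton_iff.mpr (ne_of_gt ht)))
  have hev : ∀ᶠ t in 𝓝[>] (0:ℝ), 0 < slope (deriv g) 0 t :=
    hd2'.eventually_const_lt hpos
  rw [Filter.eventually_iff_exists_mem] at hev
  obtain ⟨v, hv, hvP⟩ := hev
  rw [mem_nhdsGT_iff_exists_Ioo_subset] at hv
  obtain ⟨c, hc, hsub⟩ := hv
  have hc0 : (0:ℝ) < c := hc
  set b := min c δ / 2 with hb
  have hb0 : 0 < b := by positivity
  have hbc : b < c := by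
    have : min c δ ≤ c := min_le_left _ _
    linarith
  have hbδ : b < δ := by
    have : min c δ ≤ δ := min_le_right _ _
    linarith
  have hmono : StrictMonoOn g (Set.Icc 0 b) := by
    refine strictMonoOn_of_deriv_pos (convex_Icc _ _) (hg.continuous.continuousOn) ?_
    intro t ht
    rw [interior_Icc] at ht
    have htv : t ∈ v := hsub ⟨ht.1, lt_trans ht.2 hbc⟩
    have := hvP t htv
    rw [slope_def_field, hg'0, sub_zero, sub_zero] at this
    have ht0 : 0 < t := ht.1
    calc (0:ℝ) = 0 * t := by ring
    _ < deriv g t / t * t := by exact mul_lt_mul_of_pos_right this ht0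
    _ = deriv g t := by field_simp
  have : g 0 < g b := hmono (Set.mem_Icc.mpr ⟨le_refl 0, hb0.le⟩)
    (Set.mem_Icc.mpr ⟨hb0.le, le_refl b⟩) hb0
  have : g b ≤ g 0 := hmax b ⟨by linarith, hbδ⟩
  linarith

section aux
variable {n : ℕ} {f : (Fin n → ℝ) → ℝ}

lemma single_decomp (ξ : Fin n → ℝ) : ξ = ∑ j, ξ j • (Pi.single j 1 : Fin n → ℝ) := by
  ext k
  rw [Finset.sum_apply]
  simp [Pi.single_apply]

lemma clm_expand (ξ : Fin n → ℝ) (L : (Fin n → ℝ) →L[ℝ] ℝ) :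
    L ξ = ∑ i, ξ i * L (Pi.single i 1) := by
  conv_lhs => rw [single_decomp ξ]
  rw [map_sum]
  exact Finset.sum_congr rfl fun i _ => by rw [map_smul, smul_eq_mul]

lemma fderiv_fderiv_apply (hf : ContDiff ℝ 2 f) (x ξ η : Fin n → ℝ) :
    fderiv ℝ (fun y => fderiv ℝ f y ξ) x η = fderiv ℝ (fderiv ℝ f) x η ξ := by
  have hD : ContDiff ℝ 1 (fderiv ℝ f) := hf.fderiv_right (by norm_num)
  have hc : DifferentiableAt ℝ (fderiv ℝ f) x := (hD.differentiable (by norm_num)) x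
  have hu : DifferentiableAt ℝ (fun _ : Fin n → ℝ => ξ) x := differentiableAt_const _
  have h := fderiv_clm_apply hc hu
  rw [show (fun y => fderiv ℝ f y ξ) = fun y => (fderiv ℝ f y) ((fun _ => ξ) y) from rfl, h]
  simp

lemma pd2_eq_fderiv2 (hf : ContDiff ℝ 2 f) (x : Fin n → ℝ) (i j : Fin n) :
    pd2 f x i j = fderiv ℝ (fderiv ℝ f) x (Pi.single j 1) (Pi.single i 1) := by
  rw [pd2, fderiv_fderiv_apply hf]

lemma pd2_symm (hf : ContDiff ℝ 2 f) (x : Fin n → ℝ) (i j : Fin n) :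
    pd2 f x i j = pd2 f x j i := by
  have hs : IsSymmSndFDerivAt ℝ f x := (hf.contDiffAt).isSymmSndFDerivAt (by norm_num)
  rw [pd2_eq_fderiv2 hf, pd2_eq_fderiv2 hf, hs]

lemma fderiv2_expand (hf : ContDiff ℝ 2 f) (x ξ : Fin n → ℝ) :
    fderiv ℝ (fderiv ℝ f) x ξ ξ = ∑ i, ∑ j, ξ i * ξ j * pd2 f x i j := by
  have h2 : fderiv ℝ (fderiv ℝ f) x ξ
      = ∑ j, ξ j • fderiv ℝ (fderiv ℝ f) x (Pi.single j 1) := by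
    conv_lhs => rw [single_decomp ξ]
    rw [map_sum]
    exact Finset.sum_congr rfl fun j _ => by rw [map_smul]
  rw [h2, ContinuousLinearMap.sum_apply]
  have h3 : ∀ j, (ξ j • fderiv ℝ (fderiv ℝ f) x (Pi.single j 1)) ξ
      = ∑ i, ξ j * (ξ i * pd2 f x i j) := by
    intro j
    rw [ContinuousLinearMap.smul_apply, smul_eq_mul,
      clm_expand ξ (fderiv ℝ (fderiv ℝ f) x (Pi.single j 1)), Finset.mul_sum]
    exact Finset.sum_congr rfl fun i _ => by rw [pd2_eq_fderiv2 hf]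
  rw [Finset.sum_congr rfl (fun j _ => h3 j), Finset.sum_comm]
  exact Finset.sum_congr rfl fun i _ => Finset.sum_congr rfl fun j _ => by ring

/-- Multivariate second derivative test: at an interior maximum, the Hessian
quadratic form is nonpositive. -/
lemma quad_pd2_nonpos (hf : ContDiff ℝ 2 f) {V : Set (Fin n → ℝ)} (hV : IsOpen V)
    {x : Fin n → ℝ} (hx : x ∈ V) (hmax : ∀ y ∈ V, f y ≤ f x) (ξ : Fin n → ℝ) :
    ∑ i, ∑ j, ξ i * ξ j * pd2 f x i j ≤ 0 := by
  by_cases hξ : ξ = 0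
  · simp [hξ]
  have hξn : 0 < ‖ξ‖ := norm_pos_iff.mpr hξ
  obtain ⟨δ0, hδ0, hball⟩ := Metric.isOpen_iff.mp hV x hx
  set A : ℝ → (Fin n → ℝ) := fun σ => x + σ • ξ with hAdef
  have hA : ∀ σ, HasDerivAt A ξ σ := by
    intro σ
    have h1 : HasDerivAt (fun σ : ℝ => σ • ξ) ((1:ℝ) • ξ) σ :=
      (hasDerivAt_id σ).smul_const ξ
    exact (by simpa using h1 : HasDerivAt (fun σ : ℝ => σ • ξ) ξ σ).const_add x
  have hAc : ContDiff ℝ 2 A :=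
    contDiff_const.add (contDiff_id.smul contDiff_const)
  set g : ℝ → ℝ := fun σ => f (A σ) with hgdef
  have hg : ContDiff ℝ 2 g := hf.comp hAc
  have hgd : ∀ σ, HasDerivAt g (fderiv ℝ f (A σ) ξ) σ := fun σ =>
    ((hf.differentiable (by norm_num) (A σ)).hasFDerivAt).comp_hasDerivAt σ (hA σ)
  have hderivg : deriv g = fun σ => fderiv ℝ f (A σ) ξ :=
    funext fun σ => (hgd σ).deriv
  have hA0 : A 0 = x := by simp [hAdef]
  have hφ : DifferentiableAt ℝ (fun y => fderiv ℝ f y ξ) x := by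
    have hD : ContDiff ℝ 1 (fderiv ℝ f) := hf.fderiv_right (by norm_num)
    exact ((hD.differentiable (by norm_num)) x).clm_apply (differentiableAt_const _)
  have hg2 : HasDerivAt (deriv g) (fderiv ℝ (fun y => fderiv ℝ f y ξ) x ξ) 0 := by
    rw [hderivg]
    have h6 : HasFDerivAt (fun y => fderiv ℝ f y ξ)
        (fderiv ℝ (fun y => fderiv ℝ f y ξ) x) (A 0) := by
      rw [hA0]; exact hφ.hasFDerivAt
    exact h6.comp_hasDerivAt 0 (hA 0)
  have hkey : deriv (deriv g) 0 = ∑ i, ∑ j, ξ i * ξ j * pd2 f x i j := by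
    rw [hg2.deriv, fderiv_fderiv_apply hf, fderiv2_expand hf]
  rw [← hkey]
  refine deriv2_nonpos_of_max (δ := δ0 / ‖ξ‖) (by positivity) hg ?_
  intro σ hσ
  have habs : |σ| < δ0 / ‖ξ‖ := abs_lt.mpr ⟨hσ.1, hσ.2⟩
  have hmem : A σ ∈ V := by
    apply hball
    rw [Metric.mem_ball, dist_eq_norm]
    have he : A σ - x = σ • ξ := by simp [hAdef]
    rw [he, norm_smul]
    calc ‖σ‖ * ‖ξ‖ < (δ0 / ‖ξ‖) * ‖ξ‖ := by
          exact mul_lt_mul_of_pos_right habs hξn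
    _ = δ0 := by field_simp
  show f (A σ) ≤ f (A 0)
  rw [hA0]
  exact hmax _ hmem

end aux

section barrier
variable {n : ℕ}

noncomputable def Lq (y : Fin n → ℝ) : (Fin n → ℝ) →L[ℝ] ℝ :=
  ∑ i, (2 * y i) • ContinuousLinearMap.proj i

lemma Lq_apply (y ξ : Fin n → ℝ) : Lq y ξ = ∑ i, 2 * y i * ξ i := by
  simp [Lq, ContinuousLinearMap.sum_apply, mul_assoc]

lemma Lq_single (y : Fin n → ℝ) (j : Fin n) : Lq y (Pi.single j 1) = 2 * y j := by
  rw [Lq_apply]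
  rw [Finset.sum_eq_single j]
  · simp
  · intro k _ hk
    simp [Pi.single_apply, hk]
  · simp

lemma hasFDerivAt_qsum (y : Fin n → ℝ) :
    HasFDerivAt (fun x : Fin n → ℝ => ∑ i, x i ^ 2) (Lq y) y := by
  have h : ∀ i ∈ Finset.univ, HasFDerivAt (fun x : Fin n → ℝ => x i ^ 2)
      ((2 * y i) • (ContinuousLinearMap.proj i : (Fin n → ℝ) →L[ℝ] ℝ)) y := by
    intro i _
    have h1 : HasDerivAt (fun t : ℝ => t ^ 2) (2 * y i) (y i) := by
      simpa using hasDerivAt_pow 2 (y i)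
    have h2 := h1.comp_hasFDerivAt y
      ((ContinuousLinearMap.proj i : (Fin n → ℝ) →L[ℝ] ℝ)).hasFDerivAt
    exact h2
  exact HasFDerivAt.fun_sum h

lemma contDiff_qsum : ContDiff ℝ 2 (fun x : Fin n → ℝ => ∑ i, x i ^ 2) := by
  apply ContDiff.sum
  intro i _
  exact ((ContinuousLinearMap.proj i : (Fin n → ℝ) →L[ℝ] ℝ)).contDiff.pow 2

lemma contDiff_expquad (C β : ℝ) :
    ContDiff ℝ 2 (fun x : Fin n → ℝ => C * Real.exp (β * ∑ i, x i ^ 2)) :=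
  contDiff_const.mul ((Real.contDiff_exp.of_le le_top).comp
    (contDiff_const.mul contDiff_qsum))

lemma hasFDerivAt_expquad (C β : ℝ) (y : Fin n → ℝ) :
    HasFDerivAt (fun x : Fin n → ℝ => C * Real.exp (β * ∑ i, x i ^ 2))
      ((C * Real.exp (β * ∑ i, y i ^ 2) * β) • Lq y) y := by
  have h1 : HasFDerivAt (fun x : Fin n → ℝ => β * ∑ i, x i ^ 2) (β • Lq y) y :=
    (hasFDerivAt_qsum y).const_mul β
  have h2 := h1.exp
  have h3 := h2.const_mul C
  refine h3.congr_fderiv ?_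
  module

lemma fderiv_expquad (C β : ℝ) (y ξ : Fin n → ℝ) :
    fderiv ℝ (fun x : Fin n → ℝ => C * Real.exp (β * ∑ i, x i ^ 2)) y ξ
    = C * Real.exp (β * ∑ i, y i ^ 2) * β * Lq y ξ := by
  rw [(hasFDerivAt_expquad C β y).fderiv]
  simp

lemma pd2_expquad (C β : ℝ) (x : Fin n → ℝ) (i j : Fin n) :
    pd2 (fun y : Fin n → ℝ => C * Real.exp (β * ∑ k, y k ^ 2)) x i j
    = C * Real.exp (β * ∑ k, x k ^ 2) *
      (2 * β * (if i = j then 1 else 0) + 4 * β ^ 2 * (x i * x j)) := by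
  have hinner : (fun y : Fin n → ℝ =>
      fderiv ℝ (fun z : Fin n → ℝ => C * Real.exp (β * ∑ k, z k ^ 2)) y (Pi.single i 1))
      = fun y : Fin n → ℝ => (C * β * 2) * (Real.exp (β * ∑ k, y k ^ 2) * y i) := by
    funext y
    rw [fderiv_expquad, Lq_single]
    ring
  rw [pd2, hinner]
  have hE : HasFDerivAt (fun y : Fin n → ℝ => Real.exp (β * ∑ k, y k ^ 2))
      ((Real.exp (β * ∑ k, x k ^ 2) * β) • Lq x) x := by
    have := hasFDerivAt_expquad 1 β x
    simpa using this
  have hproj : HasFDerivAt (fun y : Fin n → ℝ => y i)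
      (ContinuousLinearMap.proj i : (Fin n → ℝ) →L[ℝ] ℝ) x :=
    (ContinuousLinearMap.proj i : (Fin n → ℝ) →L[ℝ] ℝ).hasFDerivAt
  have hmul := hE.fun_mul hproj
  have hfin := hmul.const_mul (C * β * 2)
  rw [hfin.fderiv]
  have hps : (Pi.single j 1 : Fin n → ℝ) i = (if i = j then (1:ℝ) else 0) := by
    simp [Pi.single_apply]
  simp only [ContinuousLinearMap.coe_smul', Pi.smul_apply, ContinuousLinearMap.add_apply,
    ContinuousLinearMap.smul_apply, ContinuousLinearMap.proj_apply, smul_eq_mul]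
  rw [Lq_single, hps]
  ring

lemma hasDerivAt_barrier (S Λ r s : ℝ) (m : ℕ) (t : ℝ) (hd : r - (t - s) ≠ 0) :
    HasDerivAt (fun τ => (r - (τ - s))⁻¹ ^ m *
        Real.exp ((4 * Λ)⁻¹ * (r - (τ - s))⁻¹ * S))
      (((r - (t - s))⁻¹ ^ m * Real.exp ((4 * Λ)⁻¹ * (r - (t - s))⁻¹ * S)) *
        (m * (r - (t - s))⁻¹ + (4 * Λ)⁻¹ * ((r - (t - s))⁻¹) ^ 2 * S)) t := by
  set d := r - (t - s) with hdd
  have hd1 : HasDerivAt (fun τ : ℝ => r - (τ - s)) (-1) t := by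
    simpa using ((hasDerivAt_id t).sub_const s).const_sub r
  have hd2 : HasDerivAt (fun τ : ℝ => (r - (τ - s))⁻¹) (-(-1) / d ^ 2) t := hd1.inv hd
  have hd3 : HasDerivAt (fun τ : ℝ => ((r - (τ - s))⁻¹) ^ m)
      (↑m * (d⁻¹) ^ (m - 1) * (-(-1) / d ^ 2)) t := hd2.pow m
  have hd4 : HasDerivAt (fun τ : ℝ => (4 * Λ)⁻¹ * (r - (τ - s))⁻¹ * S)
      ((4 * Λ)⁻¹ * (-(-1) / d ^ 2) * S) t := (hd2.const_mul ((4 * Λ)⁻¹)).mul_const S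
  have hd5 := hd4.exp
  have hd6 := hd3.fun_mul hd5
  refine hd6.congr_deriv ?_
  have hq : (d ^ 2)⁻¹ = d⁻¹ ^ 2 := by rw [sq, sq, mul_inv]
  have h9 : (- -1 : ℝ) / d ^ 2 = d⁻¹ ^ 2 := by rw [neg_neg, one_div, hq]
  rcases m with _ | m
  · rw [h9]; push_cast; ring
  · simp only [Nat.add_sub_cancel]
    rw [h9]; push_cast; ring

lemma continuousAt_barrier (Λ r s : ℝ) (m : ℕ) (p : (Fin n → ℝ) × ℝ)
    (hd : r - (p.2 - s) ≠ 0) :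
    ContinuousAt (fun q : (Fin n → ℝ) × ℝ => (r - (q.2 - s))⁻¹ ^ m *
      Real.exp ((4 * Λ)⁻¹ * (r - (q.2 - s))⁻¹ * ∑ i, q.1 i ^ 2)) p := by
  have hc1 : ContinuousAt (fun q : (Fin n → ℝ) × ℝ => r - (q.2 - s)) p := by fun_prop
  have hc2 : ContinuousAt (fun q : (Fin n → ℝ) × ℝ => (r - (q.2 - s))⁻¹) p := hc1.inv₀ hd
  have hc3 : ContinuousAt (fun q : (Fin n → ℝ) × ℝ => ∑ i, q.1 i ^ 2) p := by fun_prop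
  exact (hc2.pow m).mul
    ((Real.continuous_exp.continuousAt).comp ((hc2.const_mul _).mul hc3))
end barrier

section helpers
variable {n : ℕ}

lemma pd2_combo {F G : (Fin n → ℝ) → ℝ} (hF : ContDiff ℝ 2 F) (hG : ContDiff ℝ 2 G)
    (μ c : ℝ) (x : Fin n → ℝ) (i j : Fin n) :
    pd2 (fun y => F y - μ * G y - c) x i j = pd2 F x i j - μ * pd2 G x i j := by
  have hFd : ∀ y, DifferentiableAt ℝ F y := fun y => (hF.differentiable (by norm_num)) y
  have hGd : ∀ y, DifferentiableAt ℝ G y := fun y => (hG.differentiable (by norm_num)) y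
  have hinner : (fun y => fderiv ℝ (fun z => F z - μ * G z - c) y (Pi.single i 1))
      = fun y => fderiv ℝ F y (Pi.single i 1) - μ * fderiv ℝ G y (Pi.single i 1) := by
    funext y
    have h1 : HasFDerivAt (fun z => F z - μ * G z - c)
        (fderiv ℝ F y - μ • fderiv ℝ G y) y :=
      (((hFd y).hasFDerivAt).sub (((hGd y).hasFDerivAt).const_mul μ)).sub_const c
    rw [h1.fderiv]
    simp
  have hφF : DifferentiableAt ℝ (fun y => fderiv ℝ F y (Pi.single i 1)) x :=
    (((hF.fderiv_right (m := 1) (by norm_num)).differentiable (by norm_num)) x).clm_apply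
      (differentiableAt_const _)
  have hφG : DifferentiableAt ℝ (fun y => fderiv ℝ G y (Pi.single i 1)) x :=
    (((hG.fderiv_right (m := 1) (by norm_num)).differentiable (by norm_num)) x).clm_apply
      (differentiableAt_const _)
  show fderiv ℝ (fun y => fderiv ℝ (fun z => F z - μ * G z - c) y (Pi.single i 1)) x
      (Pi.single j 1) = _
  rw [hinner, fderiv_fun_sub hφF (hφG.const_mul μ), fderiv_const_mul hφG μ]
  simp [pd2]

lemma quad_single (b : Fin n → Fin n → ℝ) (i : Fin n) :
    ∑ j, ∑ k, b j k * (Pi.single i 1 : Fin n → ℝ) j * (Pi.single i 1 : Fin n → ℝ) k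
      = b i i := by
  rw [Finset.sum_eq_single i]
  · rw [Finset.sum_eq_single i]
    · simp
    · intro k _ hk; simp [Pi.single_apply, hk]
    · simp
  · intro j _ hj
    apply Finset.sum_eq_zero
    intro k _
    simp [Pi.single_apply, hj]
  · simp

lemma sq_single_sum (i : Fin n) :
    ∑ j, ((Pi.single i 1 : Fin n → ℝ) j) ^ 2 = 1 := by
  rw [Finset.sum_eq_single i]
  · simp
  · intro j _ hj; simp [Pi.single_apply, hj]
  · simp

lemma diag_sum (b : Fin n → Fin n → ℝ) (c : ℝ) :
    ∑ i, ∑ j, b i j * (c * (if i = j then (1:ℝ) else 0)) = c * ∑ i, b i i := by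
  rw [Finset.mul_sum]
  refine Finset.sum_congr rfl fun i _ => ?_
  rw [Finset.sum_eq_single i]
  · simp [mul_comm]
  · intro j _ hj; simp [(Ne.symm hj : ¬ i = j)]
  · simp

end helpers

set_option maxHeartbeats 2000000 in
lemma pl_step {n : ℕ} (U : Set (Fin n → ℝ)) (hU : IsOpen U) (T : ℝ) (hT : 0 < T)
    (u : (Fin n → ℝ) → ℝ → ℝ) (a : Fin n → Fin n → (Fin n → ℝ) → ℝ → ℝ)
    (Λ A α : ℝ) (hΛ : 0 < Λ) (hA : 0 < A) (hα : 0 < α)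
    (hu : ContDiff ℝ 2 (fun q : (Fin n → ℝ) × ℝ => u q.1 q.2))
    (hell : ∀ x t (ξ : Fin n → ℝ),
      Λ⁻¹ * (∑ i, ξ i ^ 2) ≤ ∑ i, ∑ j, a i j x t * ξ i * ξ j ∧
      ∑ i, ∑ j, a i j x t * ξ i * ξ j ≤ Λ * (∑ i, ξ i ^ 2))
    (hPDE : ∀ x ∈ U, ∀ t ∈ Set.Ioc 0 T,
      deriv (fun s => u x s) t ≤ ∑ i, ∑ j, a i j x t * pd2 (fun y => u y t) x i j)
    (hgrowth : ∀ x, ∀ t ∈ Set.Icc (0:ℝ) T, |u x t| ≤ A * Real.exp (α * ∑ i, x i ^ 2))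
    (M : ℝ) (hMf : ∀ x ∈ frontier U, ∀ t ∈ Set.Icc (0:ℝ) T, u x t ≤ M)
    (s : ℝ) (hs0 : 0 ≤ s) (hsT : s ≤ T)
    (hbase : ∀ x ∈ U, u x s ≤ M) :
    ∀ x₀ ∈ U, ∀ t₀, s ≤ t₀ → t₀ ≤ min T (s + (8*Λ*α)⁻¹/2) → u x₀ t₀ ≤ M := by
  intro x₀ hx₀ t₀ ht₀s ht₀m
  set r : ℝ := (8*Λ*α)⁻¹ with hrdef
  have hr : 0 < r := by positivity
  have hrinv : r⁻¹ = 8*Λ*α := by rw [hrdef, inv_inv]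
  have hβr : (4*Λ)⁻¹ * r⁻¹ = 2*α := by
    rw [hrinv]
    field_simp
    ring
  set τ : ℝ := min T (s + r/2) with hτdef
  have hτT : τ ≤ T := min_le_left _ _
  have hτσ : τ ≤ s + r/2 := min_le_right _ _
  have ht₀τ : t₀ ≤ τ := ht₀m
  rcases eq_or_lt_of_le ht₀s with he | hlt
  · exact he ▸ hbase x₀ hx₀
  have hd_pos : ∀ t ∈ Set.Icc s τ, r/2 ≤ r - (t - s) := by
    intro t ht
    have h1 : t ≤ s + r/2 := le_trans ht.2 hτσ
    linarith
  set w : (Fin n → ℝ) → ℝ → ℝ := fun x t => (r - (t - s))⁻¹ ^ n *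
    Real.exp ((4*Λ)⁻¹ * (r - (t - s))⁻¹ * ∑ i, x i ^ 2) with hwdef
  have hw_pos : ∀ x t, t ∈ Set.Icc s τ → 0 < w x t := by
    intro x t ht
    have h1 := hd_pos t ht
    have h2 : 0 < r - (t - s) := by linarith
    simp only [hwdef]
    exact mul_pos (pow_pos (inv_pos.mpr h2) n) (Real.exp_pos _)
  have ht₀T : t₀ ≤ T := le_trans ht₀τ hτT
  have ht₀mem : t₀ ∈ Set.Icc s τ := ⟨ht₀s, ht₀τ⟩
  have hw₀ : 0 < w x₀ t₀ := hw_pos _ _ ht₀mem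
  apply le_of_forall_pos_le_add
  intro δ hδ
  set μ : ℝ := δ / (2 * w x₀ t₀) with hμdef
  have hμ : 0 < μ := by positivity
  set ε : ℝ := δ / (2 * (t₀ - s)) with hεdef
  have hts0 : 0 < t₀ - s := by linarith
  have hε : 0 < ε := div_pos hδ (by linarith)
  suffices hsuf : u x₀ t₀ ≤ M + μ * w x₀ t₀ + ε * (t₀ - s) by
    have e1 : μ * w x₀ t₀ = δ/2 := by
      rw [hμdef]; field_simp
    have e2 : ε * (t₀ - s) = δ/2 := by
      rw [hεdef]; field_simp
    linarith
  have hq0 : ∀ x : Fin n → ℝ, 0 ≤ ∑ i, x i ^ 2 :=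
    fun x => Finset.sum_nonneg fun i _ => sq_nonneg _
  set c : ℝ := μ * (r⁻¹) ^ n with hcdef
  have hc : 0 < c := by positivity
  set R : ℝ := max ((∑ i, x₀ i ^ 2) + 1) (α⁻¹ * Real.log ((A + |M|)/c + 1)) with hRdef
  have hR1 : (∑ i, x₀ i ^ 2) + 1 ≤ R := le_max_left _ _
  have hRpos : 0 < R := lt_of_lt_of_le (by have := hq0 x₀; linarith) hR1
  have hRlog : Real.log ((A + |M|)/c + 1) ≤ α * R := by
    have h2 : α⁻¹ * Real.log ((A + |M|)/c + 1) ≤ R := le_max_right _ _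
    calc Real.log ((A + |M|)/c + 1) = α * (α⁻¹ * Real.log ((A + |M|)/c + 1)) := by
          field_simp
    _ ≤ α * R := mul_le_mul_of_nonneg_left h2 hα.le
  have hexpR : A + |M| ≤ c * Real.exp (α * R) := by
    have h3 : (A + |M|)/c + 1 ≤ Real.exp (α*R) := by
      calc (A+|M|)/c + 1 = Real.exp (Real.log ((A+|M|)/c+1)) :=
            (Real.exp_log (by positivity)).symm
      _ ≤ Real.exp (α*R) := Real.exp_le_exp.mpr hRlog
    have h4 : 0 ≤ (A + |M|)/c := by positivity
    calc A + |M| = c * ((A+|M|)/c) := by field_simp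
    _ ≤ c * ((A+|M|)/c + 1) := by nlinarith
    _ ≤ c * Real.exp (α*R) := mul_le_mul_of_nonneg_left h3 hc.le
  have hexpR1 : 1 ≤ Real.exp (α*R) := by
    rw [← Real.exp_zero]
    exact Real.exp_le_exp.mpr (by positivity)
  have hsphere : A * Real.exp (α*R) - c * Real.exp (2*α*R) ≤ M := by
    have h4 : Real.exp (2*α*R) = Real.exp (α*R) * Real.exp (α*R) := by
      rw [← Real.exp_add]; ring_nf
    rw [h4]
    have hEpos := Real.exp_pos (α*R)
    calc A * Real.exp (α*R) - c * (Real.exp (α*R) * Real.exp (α*R))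
        = (A - c * Real.exp (α*R)) * Real.exp (α*R) := by ring
    _ ≤ (-|M|) * Real.exp (α*R) := by
        apply mul_le_mul_of_nonneg_right _ hEpos.le
        linarith [hexpR]
    _ ≤ (-|M|) * 1 := by
        apply mul_le_mul_of_nonpos_left hexpR1 (neg_nonpos.mpr (abs_nonneg M))
    _ ≤ M := by
        have := neg_abs_le M
        linarith
  have hqcont : Continuous (fun x : Fin n → ℝ => ∑ i, x i ^ 2) := by
    apply continuous_finset_sum
    intro i _
    exact (continuous_apply i).pow 2
  set V : Set (Fin n→ℝ) := U ∩ {x | (∑ i, x i ^ 2) < R} with hVdef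
  have hVopen : IsOpen V := hU.inter (isOpen_lt hqcont continuous_const)
  have hx₀V : x₀ ∈ V := ⟨hx₀, by simp only [Set.mem_setOf_eq]; linarith⟩
  have hVq : closure V ⊆ {x | (∑ i, x i ^ 2) ≤ R} := by
    refine closure_minimal ?_ (isClosed_le hqcont continuous_const)
    intro x hx
    have h5 : (∑ i, x i ^ 2) < R := hx.2
    exact h5.le
  have hVU : closure V ⊆ closure U := closure_mono Set.inter_subset_left
  have hbddV : ∀ x ∈ closure V, ‖x‖ ≤ Real.sqrt R := by
    intro x hx
    rw [pi_norm_le_iff_of_nonneg (Real.sqrt_nonneg R)]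
    intro i
    have h5 : x i ^ 2 ≤ ∑ j, x j ^ 2 :=
      Finset.single_le_sum (f := fun j => x j ^2) (fun j _ => sq_nonneg _) (Finset.mem_univ i)
    have h6 : x i ^ 2 ≤ R := le_trans h5 (hVq hx)
    calc ‖x i‖ = |x i| := rfl
    _ = Real.sqrt ((x i)^2) := (Real.sqrt_sq_eq_abs _).symm
    _ ≤ Real.sqrt R := Real.sqrt_le_sqrt h6
  set K : Set ((Fin n → ℝ) × ℝ) := (closure V) ×ˢ (Set.Icc s τ) with hKdef
  have hKc : IsCompact K := by
    refine IsCompact.prod ?_ isCompact_Icc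
    refine IsCompact.of_isClosed_subset (isCompact_closedBall (0 : Fin n → ℝ) (Real.sqrt R))
      isClosed_closure ?_
    intro x hx
    rw [Metric.mem_closedBall, dist_zero_right]
    exact hbddV x hx
  set v : (Fin n→ℝ) × ℝ → ℝ := fun p => u p.1 p.2 - μ * w p.1 p.2 - ε * (p.2 - s) with hvdef
  have hKne : ((x₀, t₀) : (Fin n → ℝ) × ℝ) ∈ K := ⟨subset_closure hx₀V, ht₀mem⟩
  have hvcont : ContinuousOn v K := by
    intro p hp
    apply ContinuousAt.continuousWithinAt
    have hdp : r - (p.2 - s) ≠ 0 := by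
      have := hd_pos p.2 hp.2
      intro h; rw [h] at this; linarith
    have hcu : ContinuousAt (fun p : (Fin n→ℝ)×ℝ => u p.1 p.2) p := hu.continuous.continuousAt
    have hcw := continuousAt_barrier Λ r s n p hdp
    have hc3 : ContinuousAt (fun p : (Fin n→ℝ)×ℝ => ε * (p.2 - s)) p := by fun_prop
    simp only [hvdef, hwdef]
    exact (hcu.sub (continuousAt_const.mul hcw)).sub hc3
  obtain ⟨ps, hmem, hmax⟩ := hKc.exists_isMaxOn ⟨_, hKne⟩ hvcont
  obtain ⟨xs, ts⟩ := ps
  obtain ⟨hxs, hts⟩ := hmem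
  have hmax' : ∀ p ∈ K, v p ≤ v (xs, ts) := fun p hp => hmax hp
  have hdts : r/2 ≤ r - (ts - s) := hd_pos ts hts
  have hdts0 : 0 < r - (ts - s) := by linarith
  have hts0T : ts ∈ Set.Icc (0:ℝ) T := ⟨by linarith [hts.1], le_trans hts.2 hτT⟩
  have hclaim : v (xs, ts) ≤ M := by
    by_cases hint : xs ∈ V ∧ s < ts
    · exfalso
      obtain ⟨hxsV, hsts⟩ := hint
      have hxsU : xs ∈ U := hxsV.1
      -- time derivative
      have hucompt : ContDiff ℝ 2 (fun t' : ℝ => u xs t') :=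
        hu.comp (contDiff_const.prodMk contDiff_id)
      have hut : HasDerivAt (fun t' => u xs t') (deriv (fun t' => u xs t') ts) ts :=
        ((hucompt.differentiable (by norm_num)) ts).hasDerivAt
      have hwt := hasDerivAt_barrier (∑ i, xs i ^2) Λ r s n ts (ne_of_gt hdts0)
      have hεt : HasDerivAt (fun t' : ℝ => ε * (t' - s)) ε ts := by
        simpa using ((hasDerivAt_id ts).sub_const s).const_mul ε
      have hg : HasDerivAt (fun t' => v (xs, t'))
          (deriv (fun t' => u xs t') ts
            - μ * ((r - (ts - s))⁻¹ ^ n *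
                Real.exp ((4*Λ)⁻¹ * (r - (ts - s))⁻¹ * ∑ i, xs i ^ 2) *
              ((n:ℝ) * (r - (ts - s))⁻¹ + (4*Λ)⁻¹ * ((r - (ts - s))⁻¹)^2 * (∑ i, xs i ^2)))
            - ε) ts := by
        simp only [hvdef, hwdef]
        exact (hut.sub (hwt.const_mul μ)).sub hεt
      have h0le : 0 ≤ deriv (fun t' => v (xs, t')) ts := by
        refine deriv_nonneg_of_isMaxOn_Icc hsts hg.differentiableAt ?_
        intro t' ht'
        exact hmax' (xs, t') ⟨hxs, ⟨ht'.1, le_trans ht'.2 hts.2⟩⟩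
      rw [hg.deriv] at h0le
      have hPDE' := hPDE xs hxsU ts ⟨by linarith [hts.1, hs0], le_trans hts.2 hτT⟩
      -- space derivatives
      have hucompx : ContDiff ℝ 2 (fun y => u y ts) :=
        hu.comp (contDiff_id.prodMk contDiff_const)
      have hwx : ContDiff ℝ 2 (fun y => w y ts) := by
        simp only [hwdef]
        exact contDiff_expquad ((r - (ts - s))⁻¹ ^ n) ((4*Λ)⁻¹ * (r - (ts - s))⁻¹)
      have hf2 : ContDiff ℝ 2 (fun y => v (y, ts)) := by
        simp only [hvdef]
        exact (hucompx.sub (contDiff_const.mul hwx)).sub contDiff_const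
      have hquad := quad_pd2_nonpos hf2 hVopen hxsV
        (fun y hy => hmax' (y, ts) ⟨subset_closure hy, hts⟩)
      have htrace : ∑ i, ∑ j, a i j xs ts * pd2 (fun y => v (y, ts)) xs i j ≤ 0 := by
        refine trace_le_zero _ _ ?_ hquad (fun i j => pd2_symm hf2 xs i j)
        intro ξ
        have h7 := (hell xs ts ξ).1
        have h8 : 0 ≤ Λ⁻¹ * ∑ i, ξ i ^2 := by positivity
        linarith
      have hdecomp : ∀ i j, pd2 (fun y => v (y, ts)) xs i j
          = pd2 (fun y => u y ts) xs i j - μ * pd2 (fun y => w y ts) xs i j := by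
        intro i j
        have := pd2_combo hucompx hwx μ (ε * (ts - s)) xs i j
        rw [← this]
      set β : ℝ := (4*Λ)⁻¹ * (r - (ts - s))⁻¹ with hβdef
      have hβpos : 0 < β := mul_pos (inv_pos.mpr (by linarith)) (inv_pos.mpr hdts0)
      have hWpos : 0 < w xs ts := hw_pos xs ts hts
      have hpd2w : ∀ i j, pd2 (fun y => w y ts) xs i j
          = w xs ts * (2*β*(if i = j then 1 else 0) + 4*β^2*(xs i * xs j)) := by
        intro i j
        have h9 := pd2_expquad ((r - (ts - s))⁻¹ ^ n) β xs i j
        simp only [hwdef]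
        exact h9
      have hdiag : ∀ i, a i i xs ts ≤ Λ := by
        intro i
        have h9 := (hell xs ts (Pi.single i 1)).2
        rw [quad_single (fun j k => a j k xs ts) i, sq_single_sum i] at h9
        simpa using h9
      have hsum_diag : ∑ i, a i i xs ts ≤ (n:ℝ) * Λ := by
        calc ∑ i, a i i xs ts ≤ ∑ _i : Fin n, Λ := Finset.sum_le_sum (fun i _ => hdiag i)
        _ = (n:ℝ) * Λ := by simp [Finset.sum_const, nsmul_eq_mul, Finset.card_univ]
      have hquadxs := (hell xs ts xs).2
      have hbarrier : ∑ i, ∑ j, a i j xs ts * pd2 (fun y => w y ts) xs i j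
          ≤ w xs ts * (2*β*((n:ℝ)*Λ) + 4*β^2*(Λ * ∑ i, xs i ^2)) := by
        have e4 : ∀ i j, a i j xs ts * pd2 (fun y => w y ts) xs i j
            = a i j xs ts * ((w xs ts * 2*β) * (if i = j then (1:ℝ) else 0))
              + (w xs ts * 4*β^2) * (a i j xs ts * xs i * xs j) := by
          intro i j
          rw [hpd2w]
          ring
        rw [dsum_eq _ _ e4, dsum_add, diag_sum (fun i j => a i j xs ts) (w xs ts * 2*β),
          dsum_cmul]
        have hb1 : (w xs ts * 2*β) * (∑ i, a i i xs ts) ≤ (w xs ts * 2*β) * ((n:ℝ)*Λ) :=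
          mul_le_mul_of_nonneg_left hsum_diag (by positivity)
        have hb2 : (w xs ts * 4*β^2) * (∑ i, ∑ j, a i j xs ts * xs i * xs j)
            ≤ (w xs ts * 4*β^2)*(Λ * ∑ i, xs i ^2) :=
          mul_le_mul_of_nonneg_left hquadxs (by positivity)
        calc (w xs ts * 2*β) * (∑ i, a i i xs ts)
              + (w xs ts * 4*β^2) * (∑ i, ∑ j, a i j xs ts * xs i * xs j)
            ≤ (w xs ts * 2*β) * ((n:ℝ)*Λ) + (w xs ts * 4*β^2)*(Λ * ∑ i, xs i ^2) :=
              add_le_add hb1 hb2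
        _ = w xs ts * (2*β*((n:ℝ)*Λ) + 4*β^2*(Λ * ∑ i, xs i ^2)) := by ring
      have hLw_le_wt : w xs ts * (2*β*((n:ℝ)*Λ) + 4*β^2*(Λ * ∑ i, xs i ^2))
          ≤ w xs ts * ((n:ℝ) * (r - (ts-s))⁻¹
              + (4*Λ)⁻¹ * ((r - (ts-s))⁻¹)^2 * (∑ i, xs i ^2)) := by
        apply mul_le_mul_of_nonneg_left _ hWpos.le
        have hΛne : (Λ:ℝ) ≠ 0 := ne_of_gt hΛ
        have hdne : r - (ts - s) ≠ 0 := ne_of_gt hdts0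
        have hβeq : 4*β^2*Λ = (4*Λ)⁻¹ * ((r-(ts-s))⁻¹)^2 := by
          rw [hβdef]
          field_simp
        have h2β : 2*β*((n:ℝ)*Λ) = (n:ℝ) * (r-(ts-s))⁻¹ / 2 := by
          rw [hβdef]
          field_simp
          ring
        have hdinv : 0 ≤ (r - (ts-s))⁻¹ := inv_nonneg.mpr hdts0.le
        have hnd : 0 ≤ (n:ℝ) * (r-(ts-s))⁻¹ := mul_nonneg (Nat.cast_nonneg n) hdinv
        have hβeq' : 4*β^2*(Λ * ∑ i, xs i ^2)
            = (4*Λ)⁻¹ * ((r-(ts-s))⁻¹)^2 * (∑ i, xs i ^2) := by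
          rw [hβdef]; field_simp
        calc 2*β*((n:ℝ)*Λ) + 4*β^2*(Λ * ∑ i, xs i ^2)
            = (n:ℝ) * (r-(ts-s))⁻¹ / 2 + (4*Λ)⁻¹ * ((r-(ts-s))⁻¹)^2 * (∑ i, xs i ^2) := by
              rw [h2β, hβeq']
        _ ≤ (n:ℝ) * (r-(ts-s))⁻¹ + (4*Λ)⁻¹ * ((r-(ts-s))⁻¹)^2 * (∑ i, xs i ^2) := by
              linarith
      have e5 : ∑ i, ∑ j, a i j xs ts * pd2 (fun y => u y ts) xs i j
          = (∑ i, ∑ j, a i j xs ts * pd2 (fun y => v (y,ts)) xs i j)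
            + μ * (∑ i, ∑ j, a i j xs ts * pd2 (fun y => w y ts) xs i j) := by
        rw [← dsum_cmul]
        rw [← dsum_add]
        refine dsum_eq _ _ ?_
        intro i j
        rw [hdecomp i j]
        ring
      have hμbar : μ * (∑ i, ∑ j, a i j xs ts * pd2 (fun y => w y ts) xs i j)
          ≤ μ * (w xs ts * ((n:ℝ) * (r - (ts-s))⁻¹
              + (4*Λ)⁻¹ * ((r - (ts-s))⁻¹)^2 * (∑ i, xs i ^2))) :=
        mul_le_mul_of_nonneg_left (le_trans hbarrier hLw_le_wt) hμ.le
      have hμfin : μ * ((r - (ts - s))⁻¹ ^ n *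
                Real.exp ((4*Λ)⁻¹ * (r - (ts - s))⁻¹ * ∑ i, xs i ^ 2) *
              ((n:ℝ) * (r - (ts - s))⁻¹ + (4*Λ)⁻¹ * ((r - (ts - s))⁻¹)^2 * (∑ i, xs i ^2)))
          = μ * (w xs ts * ((n:ℝ) * (r - (ts-s))⁻¹
              + (4*Λ)⁻¹ * ((r - (ts-s))⁻¹)^2 * (∑ i, xs i ^2))) := by
        simp only [hwdef]
      have hchain : deriv (fun t' => u xs t') ts
          ≤ μ * (w xs ts * ((n:ℝ) * (r - (ts-s))⁻¹
              + (4*Λ)⁻¹ * ((r - (ts-s))⁻¹)^2 * (∑ i, xs i ^2))) := by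
        calc deriv (fun t' => u xs t') ts
            ≤ ∑ i, ∑ j, a i j xs ts * pd2 (fun y => u y ts) xs i j := hPDE'
        _ = (∑ i, ∑ j, a i j xs ts * pd2 (fun y => v (y,ts)) xs i j)
              + μ * (∑ i, ∑ j, a i j xs ts * pd2 (fun y => w y ts) xs i j) := e5
        _ ≤ 0 + μ * (w xs ts * ((n:ℝ) * (r - (ts-s))⁻¹
              + (4*Λ)⁻¹ * ((r - (ts-s))⁻¹)^2 * (∑ i, xs i ^2))) := add_le_add htrace hμbar
        _ = μ * (w xs ts * ((n:ℝ) * (r - (ts-s))⁻¹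
              + (4*Λ)⁻¹ * ((r - (ts-s))⁻¹)^2 * (∑ i, xs i ^2))) := zero_add _
      rw [hμfin] at h0le
      linarith [hchain, h0le, hε]
    · -- boundary cases
      have hwnn : 0 ≤ w xs ts := (hw_pos xs ts hts).le
      have hεnn : 0 ≤ ε * (ts - s) := mul_nonneg hε.le (by linarith [hts.1])
      have hqle : (∑ i, xs i ^ 2) ≤ R := hVq hxs
      have hvle : v (xs, ts) ≤ u xs ts - μ * w xs ts := by
        simp only [hvdef]
        linarith
      by_cases hxsU : xs ∈ U
      · by_cases hqlt : (∑ i, xs i ^ 2) < R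
        · have hts_le : ts ≤ s := by
            by_contra hcon
            exact hint ⟨⟨hxsU, hqlt⟩, lt_of_not_ge hcon⟩
          have hts_eq : ts = s := le_antisymm hts_le hts.1
          calc v (xs,ts) ≤ u xs ts - μ * w xs ts := hvle
          _ ≤ u xs ts := by nlinarith [mul_nonneg hμ.le hwnn]
          _ = u xs s := by rw [hts_eq]
          _ ≤ M := hbase xs hxsU
        · have hqe : (∑ i, xs i ^ 2) = R := le_antisymm hqle (not_lt.mp hqlt)
          have hu_le : u xs ts ≤ A * Real.exp (α * R) := by
            have h11 := hgrowth xs ts hts0T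
            calc u xs ts ≤ |u xs ts| := le_abs_self _
            _ ≤ A * Real.exp (α * ∑ i, xs i ^ 2) := h11
            _ = A * Real.exp (α * R) := by rw [hqe]
          have hw_ge : μ * ((r⁻¹)^n * Real.exp (2*α*R)) ≤ μ * w xs ts := by
            apply mul_le_mul_of_nonneg_left _ hμ.le
            have hdler : r - (ts - s) ≤ r := by linarith [hts.1]
            have hinv2 : r⁻¹ ≤ (r - (ts-s))⁻¹ := by
              apply inv_anti₀ hdts0 hdler
            have hpow : (r⁻¹)^n ≤ ((r - (ts-s))⁻¹)^n :=
              pow_le_pow_left₀ (inv_nonneg.mpr hr.le) hinv2 n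
            have hexp : Real.exp (2*α*R) ≤
                Real.exp ((4*Λ)⁻¹ * (r-(ts-s))⁻¹ * ∑ i, xs i ^ 2) := by
              apply Real.exp_le_exp.mpr
              have h12 : (4*Λ)⁻¹ * r⁻¹ ≤ (4*Λ)⁻¹ * (r-(ts-s))⁻¹ :=
                mul_le_mul_of_nonneg_left hinv2 (by positivity)
              rw [hβr] at h12
              calc 2*α*R = 2*α * ∑ i, xs i ^ 2 := by rw [hqe]
              _ ≤ (4*Λ)⁻¹ * (r-(ts-s))⁻¹ * ∑ i, xs i ^ 2 :=
                mul_le_mul_of_nonneg_right h12 (hq0 xs)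
            simp only [hwdef]
            calc (r⁻¹)^n * Real.exp (2*α*R)
                ≤ ((r - (ts-s))⁻¹)^n * Real.exp (2*α*R) :=
                  mul_le_mul_of_nonneg_right hpow (Real.exp_pos _).le
            _ ≤ ((r - (ts-s))⁻¹)^n *
                  Real.exp ((4*Λ)⁻¹ * (r-(ts-s))⁻¹ * ∑ i, xs i ^ 2) :=
                  mul_le_mul_of_nonneg_left hexp
                    (pow_nonneg (inv_nonneg.mpr hdts0.le) n)
          have hce : μ * ((r⁻¹)^n * Real.exp (2*α*R)) = c * Real.exp (2*α*R) := by
            rw [hcdef]; ring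
          calc v (xs,ts) ≤ u xs ts - μ * w xs ts := hvle
          _ ≤ A * Real.exp (α*R) - c * Real.exp (2*α*R) := by
            rw [← hce]
            linarith [hu_le, hw_ge]
          _ ≤ M := hsphere
      · have hfr : xs ∈ frontier U := by
          rw [hU.frontier_eq]
          exact ⟨hVU hxs, hxsU⟩
        have h13 := hMf xs hfr ts hts0T
        calc v (xs,ts) ≤ u xs ts - μ * w xs ts := hvle
        _ ≤ u xs ts := by nlinarith [mul_nonneg hμ.le hwnn]
        _ ≤ M := h13
  have h14 := hmax' (x₀, t₀) hKne
  have h15 : u x₀ t₀ - μ * w x₀ t₀ - ε * (t₀ - s) ≤ M := le_trans h14 hclaim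
  linarith

lemma pl_max {n : ℕ} (U : Set (Fin n → ℝ)) (hU : IsOpen U) (T : ℝ) (hT : 0 < T)
    (u : (Fin n → ℝ) → ℝ → ℝ) (a : Fin n → Fin n → (Fin n → ℝ) → ℝ → ℝ)
    (Λ A α : ℝ) (hΛ : 0 < Λ) (hA : 0 < A) (hα : 0 < α)
    (hu : ContDiff ℝ 2 (fun q : (Fin n → ℝ) × ℝ => u q.1 q.2))
    (hell : ∀ x t (ξ : Fin n → ℝ),
      Λ⁻¹ * (∑ i, ξ i ^ 2) ≤ ∑ i, ∑ j, a i j x t * ξ i * ξ j ∧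
      ∑ i, ∑ j, a i j x t * ξ i * ξ j ≤ Λ * (∑ i, ξ i ^ 2))
    (hPDE : ∀ x ∈ U, ∀ t ∈ Set.Ioc 0 T,
      deriv (fun s => u x s) t ≤ ∑ i, ∑ j, a i j x t * pd2 (fun y => u y t) x i j)
    (hgrowth : ∀ x, ∀ t ∈ Set.Icc (0:ℝ) T, |u x t| ≤ A * Real.exp (α * ∑ i, x i ^ 2))
    (M : ℝ) (hMf : ∀ x ∈ frontier U, ∀ t ∈ Set.Icc (0:ℝ) T, u x t ≤ M)
    (hM0 : ∀ x ∈ U, u x 0 ≤ M) :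
    ∀ x ∈ U, ∀ t ∈ Set.Icc (0:ℝ) T, u x t ≤ M := by
  set σ : ℝ := (8*Λ*α)⁻¹/2 with hσdef
  have hσ : 0 < σ := by positivity
  have hind : ∀ k : ℕ, ∀ x ∈ U, ∀ t, 0 ≤ t → t ≤ min T ((k:ℝ)*σ) → u x t ≤ M := by
    intro k
    induction k with
    | zero =>
      intro x hx t ht0 htk
      have h1 : t ≤ 0 := le_trans htk (by simp)
      have h2 : t = 0 := le_antisymm h1 ht0
      rw [h2]; exact hM0 x hx
    | succ k ih =>
      intro x hx t ht0 htk
      by_cases hc : t ≤ min T ((k:ℝ)*σ)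
      · exact ih x hx t ht0 hc
      push_neg at hc
      have hs'0 : (0:ℝ) ≤ min T ((k:ℝ)*σ) := le_min hT.le (by positivity)
      have hs'T : min T ((k:ℝ)*σ) ≤ T := min_le_left _ _
      have htT : t ≤ T := le_trans htk (min_le_left _ _)
      have hs'lt : min T ((k:ℝ)*σ) < T := lt_of_lt_of_le hc htT
      have hskσ : min T ((k:ℝ)*σ) = (k:ℝ)*σ := by
        rcases le_total ((k:ℝ)*σ) T with h | h
        · rw [min_eq_right h]
        · exfalso; rw [min_eq_left h] at hs'lt; exact lt_irrefl T hs'lt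
      have hbase' : ∀ y ∈ U, u y (min T ((k:ℝ)*σ)) ≤ M :=
        fun y hy => ih y hy _ hs'0 (le_refl _)
      have hstep := pl_step U hU T hT u a Λ A α hΛ hA hα hu hell hPDE hgrowth M hMf
        (min T ((k:ℝ)*σ)) hs'0 hs'T hbase'
      apply hstep x hx t (le_of_lt hc)
      refine le_min htT ?_
      show t ≤ min T ((k:ℝ)*σ) + σ
      rw [hskσ]
      have h2 : t ≤ ((k:ℝ)+1)*σ := by
        have h3 := le_trans htk (min_le_right _ _)
        push_cast at h3
        linarith
      linarith
  intro x hx t ht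
  obtain ⟨k, hk⟩ := exists_nat_ge (T/σ)
  have hTk : T ≤ (k:ℝ)*σ := by
    rw [div_le_iff₀ hσ] at hk
    linarith
  exact hind k x hx t ht.1 (le_min ht.2 (le_trans ht.2 hTk))


theorem stmt7 {n : ℕ} (U : Set (Fin n → ℝ)) (hU : IsOpen U) (T : ℝ) (hT : 0 < T)
    (u : (Fin n → ℝ) → ℝ → ℝ) (a : Fin n → Fin n → (Fin n → ℝ) → ℝ → ℝ)
    (Λ A α : ℝ) (hΛ : 0 < Λ) (hA : 0 < A) (hα : 0 < α)
    (hu : ContDiff ℝ 2 (fun q : (Fin n → ℝ) × ℝ => u q.1 q.2))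
    (ha_smooth : ∀ i j, ContDiff ℝ (⊤ : ℕ∞) (fun q : (Fin n → ℝ) × ℝ => a i j q.1 q.2))
    (ha_bdd : ∀ i j, ∃ B : ℝ, ∀ x t, |a i j x t| ≤ B)
    (hell : ∀ x t (ξ : Fin n → ℝ),
      Λ⁻¹ * (∑ i, ξ i ^ 2) ≤ ∑ i, ∑ j, a i j x t * ξ i * ξ j ∧
      ∑ i, ∑ j, a i j x t * ξ i * ξ j ≤ Λ * (∑ i, ξ i ^ 2))
    (hPDE : ∀ x ∈ U, ∀ t ∈ Set.Ioc 0 T,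
      deriv (fun s => u x s) t ≤ ∑ i, ∑ j, a i j x t * pd2 (fun y => u y t) x i j)
    (hgrowth : ∀ x, ∀ t ∈ Set.Icc (0:ℝ) T, |u x t| ≤ A * Real.exp (α * ∑ i, x i ^ 2)) :
    sSup {y : ℝ | ∃ x ∈ U, ∃ t ∈ Set.Icc (0:ℝ) T, y = u x t} =
    sSup {y : ℝ | (∃ x ∈ frontier U, ∃ t ∈ Set.Icc (0:ℝ) T, y = u x t) ∨
                  (∃ x ∈ U, y = u x 0)} := by

  by_cases hUe : U = ∅
  · have e1 : {y : ℝ | ∃ x ∈ U, ∃ t ∈ Set.Icc (0:ℝ) T, y = u x t} = ∅ := by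
      rw [hUe]; ext y; simp
    have e2 : {y : ℝ | (∃ x ∈ frontier U, ∃ t ∈ Set.Icc (0:ℝ) T, y = u x t) ∨
        (∃ x ∈ U, y = u x 0)} = ∅ := by
      rw [hUe]; ext y; simp
    rw [e1, e2]
  · obtain ⟨x₀, hx₀⟩ := Set.nonempty_iff_ne_empty.mpr hUe
    set S : Set ℝ := {y : ℝ | ∃ x ∈ U, ∃ t ∈ Set.Icc (0:ℝ) T, y = u x t} with hSdef
    set B : Set ℝ := {y : ℝ | (∃ x ∈ frontier U, ∃ t ∈ Set.Icc (0:ℝ) T, y = u x t) ∨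
        (∃ x ∈ U, y = u x 0)} with hBdef
    have hSne : S.Nonempty := ⟨u x₀ 0, ⟨x₀, hx₀, 0, ⟨le_refl 0, hT.le⟩, rfl⟩⟩
    have hBne : B.Nonempty := ⟨u x₀ 0, Or.inr ⟨x₀, hx₀, rfl⟩⟩
    have hub : upperBounds S = upperBounds B := by
      ext M
      constructor
      · intro hM y hy
        rcases hy with ⟨x, hxf, t, ht, rfl⟩ | ⟨x, hx, rfl⟩
        · have hxcl : x ∈ closure U := by
            rw [hU.frontier_eq] at hxf; exact hxf.1
          have hnb : (nhdsWithin x U).NeBot := mem_closure_iff_nhdsWithin_neBot.mp hxcl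
          have hcont0 : Continuous (fun y => u y t) :=
            hu.continuous.comp (continuous_id.prodMk continuous_const)
          have hcont : Filter.Tendsto (fun y => u y t) (nhdsWithin x U) (nhds (u x t)) :=
            hcont0.continuousAt.continuousWithinAt
          refine le_of_tendsto hcont ?_
          refine eventually_nhdsWithin_of_forall ?_
          intro y hy
          exact hM (show u y t ∈ S from ⟨y, hy, t, ht, rfl⟩)
        · exact hM (show u x 0 ∈ S from ⟨x, hx, 0, ⟨le_refl 0, hT.le⟩, rfl⟩)
      · intro hM y hy
        obtain ⟨x, hx, t, ht, rfl⟩ := hy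
        refine pl_max U hU T hT u a Λ A α hΛ hA hα hu hell hPDE hgrowth M ?_ ?_ x hx t ht
        · intro z hz t' ht'
          exact hM (show u z t' ∈ B from Or.inl ⟨z, hz, t', ht', rfl⟩)
        · intro z hz
          exact hM (show u z 0 ∈ B from Or.inr ⟨z, hz, rfl⟩)
    by_cases hbdd : BddAbove S
    · have hbddB : BddAbove B := by rw [BddAbove, ← hub]; exact hbdd
      have h1 := isLUB_csSup hSne hbdd
      have h2 := isLUB_csSup hBne hbddB
      have h2' : IsLUB S (sSup B) := by rw [IsLUB, hub]; exact h2
      exact h1.unique h2'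
    · have hbddB : ¬ BddAbove B := by rw [BddAbove, ← hub]; exact hbdd
      rw [Real.sSup_of_not_bddAbove hbdd, Real.sSup_of_not_bddAbove hbddB]
end

section
/- Let f : [0,1] → ℝ be smooth with bounded derivatives of all orders on [0,1), and suppose that for every l ∈ ℕ there is C_l with |f(p)| ≤ C_l(1−p)^l near p = 1. Then f^{(k)}(p) → 0 as p → 1 for every k ∈ ℕ. -/
open Set Filter Topology Nat

/-- For globally smooth functions, iterated derivatives within a set of unique
differentiability agree with the global iterated derivatives. -/
lemma stmt18_aux_iteratedDerivWithin_eq {f : ℝ → ℝ} (hf : ContDiff ℝ (⊤ : ℕ∞) f) (n : ℕ)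
    {s : Set ℝ} (hs : UniqueDiffOn ℝ s) : ∀ x ∈ s,
    iteratedDerivWithin n f s x = iteratedDeriv n f x := by
  induction n with
  | zero => intro x hx; simp
  | succ n ih =>
    intro x hx
    rw [iteratedDerivWithin_succ, iteratedDeriv_succ]
    have h1 : derivWithin (iteratedDerivWithin n f s) s x
        = derivWithin (iteratedDeriv n f) s x := by
      apply derivWithin_congr
      · intro y hy; exact ih y hy
      · exact ih x hx
    rw [h1]
    exact ((hf.differentiable_iteratedDeriv n (by
      exact_mod_cast lt_top_iff_ne_top.mpr (by simp))) x).derivWithin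
      (hs.uniqueDiffWithinAt hx)

theorem stmt18 (f : ℝ → ℝ) (hf : ContDiff ℝ (⊤ : ℕ∞) f)
    (hbdd : ∀ k : ℕ, ∃ B : ℝ, ∀ p ∈ Set.Ico (0:ℝ) 1, |iteratedDeriv k f p| ≤ B)
    (hdecay : ∀ l : ℕ, ∃ C : ℝ, ∀ᶠ p in nhdsWithin 1 (Set.Iio 1), |f p| ≤ C * (1 - p)^l) :
    ∀ k : ℕ, Filter.Tendsto (iteratedDeriv k f) (nhdsWithin 1 (Set.Iio 1)) (nhds 0) := by
  -- Reflected function g(x) = f(2 - x); it decays to the right of 1.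
  set g : ℝ → ℝ := fun x => f (2 - x) with hg_def
  have hg : ContDiff ℝ (⊤ : ℕ∞) g := hf.comp (contDiff_const.sub contDiff_id)
  -- relation between iterated derivatives of g and f
  have hrel : ∀ n : ℕ, ∀ x : ℝ,
      iteratedDeriv n g x = (-1 : ℝ) ^ n • iteratedDeriv n f (2 - x) := by
    intro n x
    have h1 : g = (fun z => f (2 + z)) ∘ (fun x => -x) := by
      funext y; simp [hg_def, sub_eq_add_neg]
    rw [h1]
    have := iteratedDeriv_comp_neg n (fun z => f (2 + z)) x
    simp only [Function.comp_def] at this ⊢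
    rw [this, iteratedDeriv_comp_const_add n f 2]
    norm_num [sub_eq_add_neg]
  -- decay of g to the right of 1
  have hmap : Tendsto (fun x : ℝ => 2 - x) (nhdsWithin 1 (Set.Ioi 1))
      (nhdsWithin 1 (Set.Iio 1)) := by
    rw [tendsto_nhdsWithin_iff]
    constructor
    · have hc : Continuous (fun x : ℝ => 2 - x) := continuous_const.sub continuous_id
      have h1 := hc.tendsto 1
      norm_num at h1
      exact h1.mono_left nhdsWithin_le_nhds
    · filter_upwards [self_mem_nhdsWithin] with x hx
      simp only [Set.mem_Ioi] at hx
      simp only [Set.mem_Iio]; linarith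
  have hgdecay : ∀ l : ℕ, ∃ C : ℝ, ∀ᶠ x in nhdsWithin 1 (Set.Ioi 1),
      |g x| ≤ C * (x - 1) ^ l := by
    intro l
    obtain ⟨C, hC⟩ := hdecay l
    refine ⟨C, ?_⟩
    filter_upwards [hmap.eventually hC] with x hx
    have : (1 : ℝ) - (2 - x) = x - 1 := by ring
    simpa [hg_def, this] using hx
  -- all iterated derivatives of g vanish at 1
  have key : ∀ k : ℕ, iteratedDeriv k g 1 = 0 := by
    intro k
    induction k using Nat.strong_induction_on with
    | _ k ih =>
      set D : ℝ := iteratedDeriv k g 1 with hD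
      have hUD : UniqueDiffOn ℝ (Set.Icc (1:ℝ) 2) := uniqueDiffOn_Icc (by norm_num)
      have hgC : ContDiffOn ℝ (k + 1 : ℕ) g (Set.Icc (1:ℝ) 2) :=
        (hg.of_le (by exact_mod_cast le_top)).contDiffOn
      obtain ⟨M, hM⟩ := exists_taylor_mean_remainder_bound (by norm_num : (1:ℝ) ≤ 2) hgC
      obtain ⟨C, hC⟩ := hgdecay (k + 1)
      -- Taylor polynomial reduces to its top term
      have htay : ∀ x : ℝ, taylorWithinEval g k (Set.Icc (1:ℝ) 2) 1 x
          = ((k ! : ℝ)⁻¹ * (x - 1) ^ k) * D := by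
        intro x
        rw [taylor_within_apply]
        rw [Finset.sum_range_succ]
        have hmem : (1:ℝ) ∈ Set.Icc (1:ℝ) 2 := by constructor <;> norm_num
        have hzero : ∀ j ∈ Finset.range k,
            ((j ! : ℝ)⁻¹ * (x - 1) ^ j) • iteratedDerivWithin j g (Set.Icc (1:ℝ) 2) 1
              = 0 := by
          intro j hj
          rw [stmt18_aux_iteratedDerivWithin_eq hg j hUD 1 hmem,
            ih j (Finset.mem_range.mp hj)]
          simp
        rw [Finset.sum_eq_zero hzero,
          stmt18_aux_iteratedDerivWithin_eq hg k hUD 1 hmem]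
        simp [hD, smul_eq_mul]
      -- bound |D|/k! ≤ (C+M)(x-1) near 1 from the right
      have hbound : ∀ᶠ x in nhdsWithin 1 (Set.Ioi 1),
          |D| * (k ! : ℝ)⁻¹ ≤ (|C| + |M|) * (x - 1) := by
        have hIcc : ∀ᶠ x in nhdsWithin 1 (Set.Ioi 1), x ∈ Set.Ioc (1:ℝ) 2 := by
          have : Set.Ioc (1:ℝ) 2 ∈ nhdsWithin 1 (Set.Ioi 1) := by
            rw [mem_nhdsWithin]
            exact ⟨Set.Iio 2, isOpen_Iio, by norm_num, fun y hy =>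
              ⟨hy.2, le_of_lt hy.1⟩⟩
          exact this
        filter_upwards [hC, hIcc] with x hx hx2
        have hx1 : (1:ℝ) < x := hx2.1
        have hxpos : (0:ℝ) < x - 1 := by linarith
        have hMx := hM x ⟨le_of_lt hx1, hx2.2⟩
        rw [htay x] at hMx
        have h1 : |((k ! : ℝ)⁻¹ * (x - 1) ^ k) * D|
            ≤ |g x| + M * (x - 1) ^ (k + 1) := by
          have habs := abs_sub_abs_le_abs_sub (((k ! : ℝ)⁻¹ * (x - 1) ^ k) * D) (g x)
          rw [Real.norm_eq_abs, abs_sub_comm] at hMx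
          linarith
        have h2 : |g x| + M * (x - 1) ^ (k + 1)
            ≤ (|C| + |M|) * (x - 1) ^ (k + 1) := by
          have hxp : (0:ℝ) ≤ (x - 1) ^ (k + 1) := by positivity
          have hMle : M * (x - 1) ^ (k + 1) ≤ |M| * (x - 1) ^ (k + 1) :=
            mul_le_mul_of_nonneg_right (le_abs_self M) hxp
          have hCle : C * (x - 1) ^ (k + 1) ≤ |C| * (x - 1) ^ (k + 1) :=
            mul_le_mul_of_nonneg_right (le_abs_self C) hxp
          have := hx
          nlinarith
        have h3 : |((k ! : ℝ)⁻¹ * (x - 1) ^ k) * D|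
            = |D| * (k ! : ℝ)⁻¹ * (x - 1) ^ k := by
          rw [abs_mul, abs_mul, abs_pow, abs_of_pos hxpos,
            abs_of_pos (by positivity : (0:ℝ) < (k ! : ℝ)⁻¹)]
          ring
        have h4 : |D| * (k ! : ℝ)⁻¹ * (x - 1) ^ k
            ≤ ((|C| + |M|) * (x - 1)) * (x - 1) ^ k := by
          calc |D| * (k ! : ℝ)⁻¹ * (x - 1) ^ k
              = |((k ! : ℝ)⁻¹ * (x - 1) ^ k) * D| := h3.symm
            _ ≤ (|C| + |M|) * (x - 1) ^ (k + 1) := le_trans h1 h2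
            _ = ((|C| + |M|) * (x - 1)) * (x - 1) ^ k := by ring
        exact le_of_mul_le_mul_right h4 (by positivity)
      -- RHS tends to 0
      have htend : Tendsto (fun x : ℝ => (|C| + |M|) * (x - 1))
          (nhdsWithin 1 (Set.Ioi 1)) (nhds 0) := by
        have hc : Continuous (fun x : ℝ => (|C| + |M|) * (x - 1)) :=
          continuous_const.mul (continuous_id.sub continuous_const)
        have h1 := hc.tendsto 1
        norm_num at h1
        exact h1.mono_left nhdsWithin_le_nhds
      have hle : |D| * (k ! : ℝ)⁻¹ ≤ 0 :=
        ge_of_tendsto htend hbound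
      have hk : (0:ℝ) < (k ! : ℝ)⁻¹ := by positivity
      have : |D| ≤ 0 := by
        by_contra h
        push_neg at h
        nlinarith
      have : |D| = 0 := le_antisymm this (abs_nonneg D)
      exact abs_eq_zero.mp this
  -- hence all iterated derivatives of f vanish at 1
  have keyf : ∀ k : ℕ, iteratedDeriv k f 1 = 0 := by
    intro k
    have := hrel k 1
    rw [key k] at this
    have h2 : (2:ℝ) - 1 = 1 := by norm_num
    rw [h2] at this
    have hne : ((-1 : ℝ) ^ k) ≠ 0 := by
      apply pow_ne_zero; norm_num
    have := this.symm
    rw [smul_eq_mul] at this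
    exact (mul_eq_zero.mp this).resolve_left hne
  -- conclude by continuity
  intro k
  have hcont : Continuous (iteratedDeriv k f) :=
    hf.continuous_iteratedDeriv k (by exact_mod_cast le_top)
  have : Tendsto (iteratedDeriv k f) (nhds 1) (nhds (iteratedDeriv k f 1)) :=
    hcont.continuousAt.tendsto
  rw [keyf k] at this
  exact this.mono_left nhdsWithin_le_nhds
end
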